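/- arXiv:1804.00211 — 8 statements merged into one kernel-verified Lean document; each statement's English description precedes it below -/
import Mathlib

section
/- Let Φ be a Horn formula and ρ ⊆ V_Φ a set of variables assigned true. Then every unit literal produced by unit propagation when computing the closure of Φ⁺|_ρ is a positive literal, and this closure never produces the empty clause (i.e., (Φ⁺|_ρ)* ≠ ⊥). -/
abbrev Lit (V : Type) := V × Bool
abbrev Clause (V : Type) := Finset (Lit V)
abbrev CnfForm (V : Type) := Finset (Clause V)

variable {V : Type} [DecidableEq V]

/-- Restriction Φ|_ρ : remove clauses containing a literal of ρ, and delete from the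
remaining clauses every literal whose complement is in ρ. -/
def restrict (Φ : CnfForm V) (ρ : Finset (Lit V)) : CnfForm V :=
  (Φ.filter fun c => ∀ l ∈ ρ, l ∉ c).image fun c => c.filter fun l => (l.1, !l.2) ∉ ρ

/-- Unit propagation derives the literal `l` from `Φ` : repeatedly assigning the
literals of unit clauses true and simplifying eventually produces the unit clause
`{l}` or the empty clause. -/
inductive UPDerives : CnfForm V → Lit V → Prop
  | unit {Φ : CnfForm V} {l : Lit V} : ({l} : Clause V) ∈ Φ → UPDerives Φ l
  | bot {Φ : CnfForm V} {l : Lit V} : (∅ : Clause V) ∈ Φ → UPDerives Φ l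
  | step {Φ : CnfForm V} {l : Lit V} (m : Lit V) : ({m} : Clause V) ∈ Φ →
      UPDerives (restrict Φ {m}) l → UPDerives Φ l

/-- Unit propagation derives the empty clause from `Φ`, i.e. `Φ* = ⊥`. -/
inductive UPEmpty : CnfForm V → Prop
  | bot {Φ : CnfForm V} : (∅ : Clause V) ∈ Φ → UPEmpty Φ
  | step {Φ : CnfForm V} (m : Lit V) : ({m} : Clause V) ∈ Φ → UPEmpty (restrict Φ {m}) → UPEmpty Φ

/-- `UPReach Φ Ψ` : the formula `Ψ` is obtained from `Φ` by a sequence of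
unit-propagation steps. -/
inductive UPReach : CnfForm V → CnfForm V → Prop
  | refl (Φ : CnfForm V) : UPReach Φ Φ
  | step {Φ Ψ : CnfForm V} (m : Lit V) : UPReach Φ Ψ → ({m} : Clause V) ∈ Ψ →
      UPReach Φ (restrict Ψ {m})

/-- The set of variables occurring in `Φ`. -/
def varsOf (Φ : CnfForm V) : Finset V := Φ.biUnion fun c => c.image Prod.fst

/-- A Horn formula: every clause contains at most one positive literal. -/
def IsHorn (Φ : CnfForm V) : Prop := ∀ c ∈ Φ, (c.filter fun l => l.2 = true).card ≤ 1

/-- `Φ⁻` : the negative clauses of `Φ` (no positive literal). -/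
def negClauses (Φ : CnfForm V) : CnfForm V := Φ.filter fun c => ∀ l ∈ c, l.2 = false

/-- `Φ⁺` : the clauses of `Φ` with exactly one positive literal. -/
def posPart (Φ : CnfForm V) : CnfForm V :=
  Φ.filter fun c => (c.filter fun l => l.2 = true).card = 1

/-!
Restricting by positive literals never deletes a positive literal from a surviving clause, so
the invariant "every clause has exactly one positive literal", which holds for `Φ⁺`, survives
the restriction by `ρ` and every unit-propagation step: each step assigns the literal of a unit
clause, which by the invariant is positive. A unit clause with exactly one positive literal is
a positive literal, and the empty clause has none.
-/

def posLits (c : Clause V) : Clause V := c.filter fun l => l.2 = true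

lemma posLits_filter_compl_not_mem {ρ : Finset (Lit V)} (hρ : ∀ m ∈ ρ, m.2 = true)
    (c : Clause V) : posLits (c.filter fun l => (l.1, !l.2) ∉ ρ) = posLits c := by
  rw [posLits, posLits, Finset.filter_filter]
  refine Finset.filter_congr fun l _ => ⟨And.right, fun hl => ⟨fun hmem => ?_, hl⟩⟩
  simpa [hl] using hρ _ hmem

lemma card_posLits_restrict {Φ : CnfForm V} {ρ : Finset (Lit V)} (hρ : ∀ m ∈ ρ, m.2 = true)
    (hΦ : ∀ c ∈ Φ, (posLits c).card = 1) : ∀ c ∈ restrict Φ ρ, (posLits c).card = 1 := by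
  intro c hc
  obtain ⟨d, hd, rfl⟩ := Finset.mem_image.mp hc
  rw [posLits_filter_compl_not_mem hρ]
  exact hΦ d (Finset.mem_filter.mp hd).1

lemma pos_of_card_posLits_singleton {V : Type} {l : Lit V} (h : (posLits {l}).card = 1) :
    l.2 = true := by
  by_contra hl
  rw [posLits, Finset.filter_singleton, if_neg hl] at h
  exact zero_ne_one h

lemma UPReach.card_posLits {Φ Ψ : CnfForm V} (hreach : UPReach Φ Ψ)
    (hΦ : ∀ c ∈ Φ, (posLits c).card = 1) : ∀ c ∈ Ψ, (posLits c).card = 1 := by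
  induction hreach with
  | refl => exact hΦ
  | step m _ hm ih =>
    refine card_posLits_restrict (fun m' hm' => ?_) ih
    rw [Finset.mem_singleton.mp hm']
    exact pos_of_card_posLits_singleton (ih _ hm)

theorem stmt1_general {V : Type} [DecidableEq V] (Φ : CnfForm V) (ρ : Finset V) :
    ∀ Ψ : CnfForm V, UPReach (restrict (posPart Φ) (ρ.image fun x => (x, true))) Ψ →
      (∀ l : Lit V, ({l} : Clause V) ∈ Ψ → l.2 = true) ∧ (∅ : Clause V) ∉ Ψ := by
  intro Ψ hreach
  have hρ : ∀ m ∈ ρ.image fun x => (x, true), m.2 = true := by simp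
  have hΨ : ∀ c ∈ Ψ, (posLits c).card = 1 :=
    hreach.card_posLits <| card_posLits_restrict hρ fun c hc => (Finset.mem_filter.mp hc).2
  refine ⟨fun l hl => pos_of_card_posLits_singleton (hΨ _ hl), fun h => ?_⟩
  simpa [posLits] using hΨ _ h

/-- For a Horn formula `Φ` and `ρ ⊆ V_Φ` a set of variables assigned
true, every unit literal produced while computing the closure of `Φ⁺|_ρ` is positive,
and the empty clause is never produced. -/
theorem stmt1 {V : Type} [DecidableEq V] (Φ : CnfForm V) (ρ : Finset V)
    (hHorn : IsHorn Φ) (hρ : ρ ⊆ varsOf Φ) :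
    ∀ Ψ : CnfForm V, UPReach (restrict (posPart Φ) (ρ.image fun x => (x, true))) Ψ →
      (∀ l : Lit V, ({l} : Clause V) ∈ Ψ → l.2 = true) ∧ (∅ : Clause V) ∉ Ψ :=
  stmt1_general Φ ρ
end

section
/- Let n ≥ 2 and let Φ be the formula obtained by adding ¬y to every clause of the sequential-counter AtMostOne encoding, i.e., the clauses (¬y ∨ ¬x_1 ∨ p_1), (¬y ∨ ¬x_n ∨ ¬p_{n−1}), and for 1 < i < n the clauses (¬y ∨ ¬x_i ∨ p_i), (¬y ∨ ¬p_{i−1} ∨ p_i), (¬y ∨ ¬x_i ∨ ¬p_{i−1}). Then assigning x_1 and x_n to true (with y and all p_i unassigned) produces a restricted formula containing no unit clause, so unit propagation derives no literal; in particular ¬y is not derived, and hence this encoding does not maintain generalized arc consistency for y → (x_1 + ⋯ + x_n ≤ 1). -/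
variable {V : Type} [DecidableEq V]

/-- The sequential-counter AtMostOne encoding with `¬y` added to *every* clause:
`(¬y ∨ ¬x_1 ∨ p_1)`, `(¬y ∨ ¬x_n ∨ ¬p_{n-1})`, and for `1 < i < n` the clauses
`(¬y ∨ ¬x_i ∨ p_i)`, `(¬y ∨ ¬p_{i-1} ∨ p_i)`, `(¬y ∨ ¬x_i ∨ ¬p_{i-1})`. -/
def seqAMOAllY (n : ℕ) (x p : ℕ → V) (y : V) : CnfForm V :=
  insert ({(y, false), (x 1, false), (p 1, true)} : Clause V)
    (insert ({(y, false), (x n, false), (p (n - 1), false)} : Clause V)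
      ((Finset.Ioo 1 n).biUnion fun i =>
        ({({(y, false), (x i, false), (p i, true)} : Clause V),
          ({(y, false), (p (i - 1), false), (p i, true)} : Clause V),
          ({(y, false), (x i, false), (p (i - 1), false)} : Clause V)} : CnfForm V)))

/-- Adding `¬y` to every clause of the sequential-counter AtMostOne
encoding breaks GAC: assigning `x_1` and `x_n` to true yields a restricted formula
with no unit clause, so unit propagation derives no literal — in particular not `¬y`. -/
theorem stmt5 {V : Type} [DecidableEq V] (n : ℕ) (hn : 2 ≤ n) (x p : ℕ → V) (y : V)
    (hx : ∀ i ∈ Finset.Icc 1 n, ∀ j ∈ Finset.Icc 1 n, x i = x j → i = j)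
    (hp : ∀ i ∈ Finset.Icc 1 (n - 1), ∀ j ∈ Finset.Icc 1 (n - 1), p i = p j → i = j)
    (hxp : ∀ i ∈ Finset.Icc 1 n, ∀ j ∈ Finset.Icc 1 (n - 1), x i ≠ p j)
    (hxy : ∀ i ∈ Finset.Icc 1 n, x i ≠ y)
    (hpy : ∀ j ∈ Finset.Icc 1 (n - 1), p j ≠ y) :
    (∀ l : Lit V, ({l} : Clause V) ∉
        restrict (seqAMOAllY n x p y) ({(x 1, true), (x n, true)} : Finset (Lit V))) ∧
    (∀ l : Lit V, ¬ UPDerives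
        (restrict (seqAMOAllY n x p y) ({(x 1, true), (x n, true)} : Finset (Lit V))) l) :=  by
  have h1 : (1:ℕ) ∈ Finset.Icc 1 n := by simp; omega
  have hn' : n ∈ Finset.Icc 1 n := by simp; omega
  have key : ∀ c ∈ restrict (seqAMOAllY n x p y)
      ({(x 1, true), (x n, true)} : Finset (Lit V)), 2 ≤ c.card := by
    intro c hc
    simp only [restrict, Finset.mem_image, Finset.mem_filter] at hc
    obtain ⟨d, ⟨hdΦ, -⟩, rfl⟩ := hc
    have hYsurv : ((y, true) : Lit V) ∉ ({(x 1, true), (x n, true)} : Finset (Lit V)) := by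
      simp only [Finset.mem_insert, Finset.mem_singleton, Prod.mk.injEq]
      push_neg
      exact ⟨fun h => absurd h.symm (hxy 1 h1), fun h => absurd h.symm (hxy n hn')⟩
    have hPsurv : ∀ j ∈ Finset.Icc 1 (n-1),
        ((p j, true) : Lit V) ∉ ({(x 1, true), (x n, true)} : Finset (Lit V)) := by
      intro j hj
      simp only [Finset.mem_insert, Finset.mem_singleton, Prod.mk.injEq]
      push_neg
      exact ⟨fun h => absurd h.symm (hxp 1 h1 j hj), fun h => absurd h.symm (hxp n hn' j hj)⟩
    have hFsurv : ∀ v : V, ((v, false) : Lit V) ∉ ({(x 1, true), (x n, true)} : Finset (Lit V)) := by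
      intro v; simp [Prod.mk.injEq]
    -- membership of the two surviving literals
    have two_mem : ∀ (a b : Lit V), a ∈ d → b ∈ d →
        ((a.1, !a.2) : Lit V) ∉ ({(x 1, true), (x n, true)} : Finset (Lit V)) →
        ((b.1, !b.2) : Lit V) ∉ ({(x 1, true), (x n, true)} : Finset (Lit V)) →
        a ≠ b →
        2 ≤ (d.filter fun l => ((l.1, !l.2) : Lit V) ∉
          ({(x 1, true), (x n, true)} : Finset (Lit V))).card := by
      intro a b ha hb hsa hsb hab
      exact Finset.one_lt_card.mpr ⟨a, Finset.mem_filter.mpr ⟨ha, hsa⟩,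
        b, Finset.mem_filter.mpr ⟨hb, hsb⟩, hab⟩
    simp only [seqAMOAllY, Finset.mem_insert, Finset.mem_biUnion, Finset.mem_Ioo,
      Finset.mem_singleton] at hdΦ
    have h1n1 : (1:ℕ) ∈ Finset.Icc 1 (n-1) := by simp; omega
    have hn1 : (n-1:ℕ) ∈ Finset.Icc 1 (n-1) := by simp; omega
    rcases hdΦ with rfl | rfl | ⟨i, ⟨hi1, hi2⟩, rfl | rfl | rfl⟩
    · exact two_mem (y, false) (p 1, true) (by simp) (by simp) (hYsurv) (hFsurv (p 1))
        (by simp)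
    · refine two_mem (y, false) (p (n-1), false) (by simp) (by simp) hYsurv
        (hPsurv (n-1) hn1) ?_
      simp only [ne_eq, Prod.mk.injEq, not_and]
      intro h; exact absurd h.symm (hpy (n-1) hn1)
    · have hii : i ∈ Finset.Icc 1 (n-1) := by simp; omega
      exact two_mem (y, false) (p i, true) (by simp) (by simp) hYsurv (hFsurv (p i))
        (by simp)
    · have hii : i ∈ Finset.Icc 1 (n-1) := by simp; omega
      exact two_mem (y, false) (p i, true) (by simp) (by simp) hYsurv (hFsurv (p i))
        (by simp)
    · have hii : (i-1) ∈ Finset.Icc 1 (n-1) := by simp; omega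
      refine two_mem (y, false) (p (i-1), false) (by simp) (by simp) hYsurv
        (hPsurv (i-1) hii) ?_
      simp only [ne_eq, Prod.mk.injEq, not_and]
      intro h; exact absurd h.symm (hpy (i-1) hii)
  constructor
  · intro l hl
    have := key _ hl
    simp at this
  · intro l h
    cases h with
    | unit hmem => have := key _ hmem; simp at this
    | bot hmem => have := key _ hmem; simp at this
    | step m hmem _ => have := key _ hmem; simp at this
end

section
/- Let n ≥ 2 and let Φ be the conditional sequential-counter AtMostOne encoding consisting of the clauses (¬x_1 ∨ p_1), (¬y ∨ ¬x_n ∨ ¬p_{n−1}), and for 1 < i < n the clauses (¬x_i ∨ p_i), (¬p_{i−1} ∨ p_i), (¬y ∨ ¬x_i ∨ ¬p_{i−1}). Then for any two distinct indices i < j in {1, …, n}, assigning x_i and x_j to true makes unit propagation derive ¬y from Φ restricted to this assignment. -/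
variable {V : Type} [DecidableEq V]

/-- The conditional sequential-counter AtMostOne encoding of `y → (x_1 + ⋯ + x_n ≤ 1)`:
the clauses `(¬x_1 ∨ p_1)`, `(¬y ∨ ¬x_n ∨ ¬p_{n-1})`, and for `1 < i < n` the clauses
`(¬x_i ∨ p_i)`, `(¬p_{i-1} ∨ p_i)`, `(¬y ∨ ¬x_i ∨ ¬p_{i-1})`. -/
def seqAMOCond (n : ℕ) (x p : ℕ → V) (y : V) : CnfForm V :=
  insert ({(x 1, false), (p 1, true)} : Clause V)
    (insert ({(y, false), (x n, false), (p (n - 1), false)} : Clause V)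
      ((Finset.Ioo 1 n).biUnion fun i =>
        ({({(x i, false), (p i, true)} : Clause V),
          ({(p (i - 1), false), (p i, true)} : Clause V),
          ({(y, false), (x i, false), (p (i - 1), false)} : Clause V)} : CnfForm V)))

lemma mem_restrict {Φ : CnfForm V} {ρ : Finset (Lit V)} {c : Clause V}
    (hc : c ∈ Φ) (h : ∀ l ∈ ρ, l ∉ c) :
    (c.filter fun l => (l.1, !l.2) ∉ ρ) ∈ restrict Φ ρ := by
  unfold restrict
  exact Finset.mem_image_of_mem _ (Finset.mem_filter.2 ⟨hc, h⟩)

lemma restrict_union (Φ : CnfForm V) (ρ σ : Finset (Lit V))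
    (h : ∀ l ∈ σ, (l.1, !l.2) ∉ ρ) :
    restrict (restrict Φ ρ) σ = restrict Φ (ρ ∪ σ) := by
  ext c
  simp only [restrict, Finset.mem_image, Finset.mem_filter, Finset.mem_union]
  constructor
  · rintro ⟨c', ⟨⟨c₀, ⟨hc₀, hρ⟩, rfl⟩, hσ⟩, rfl⟩
    refine ⟨c₀, ⟨hc₀, ?_⟩, ?_⟩
    · intro l hl
      rcases hl with h1 | h1
      · exact hρ l h1
      · intro hlc
        exact hσ l h1 (Finset.mem_filter.2 ⟨hlc, h l h1⟩)
    · rw [Finset.filter_filter]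
      apply Finset.filter_congr
      intro l _
      simp only [Finset.mem_union, not_or, eq_iff_iff]
  · rintro ⟨c₀, ⟨hc₀, hρσ⟩, rfl⟩
    refine ⟨c₀.filter fun l => (l.1, !l.2) ∉ ρ,
      ⟨⟨c₀, ⟨hc₀, fun l hl => hρσ l (Or.inl hl)⟩, rfl⟩, ?_⟩, ?_⟩
    · intro l hl hlc
      exact hρσ l (Or.inr hl) (Finset.mem_filter.1 hlc).1
    · rw [Finset.filter_filter]
      apply Finset.filter_congr
      intro l _
      simp only [Finset.mem_union, not_or, eq_iff_iff]

/-- the growing assignment -/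
def assn (x p : ℕ → V) (i j k : ℕ) : Finset (Lit V) :=
  insert (x i, true) (insert (x j, true) ((Finset.Icc i k).image fun m => (p m, true)))

lemma assn_true {x p : ℕ → V} {i j k : ℕ} {l : Lit V} (hl : l ∈ assn x p i j k) :
    l.2 = true := by
  simp only [assn, Finset.mem_insert, Finset.mem_image] at hl
  rcases hl with rfl | rfl | ⟨m, _, rfl⟩ <;> rfl

lemma assn_succ (x p : ℕ → V) (i j k : ℕ) (hk : i ≤ k + 1) :
    assn x p i j k ∪ {((p (k + 1), true) : Lit V)} = assn x p i j (k + 1) := by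
  ext l
  simp only [assn, Finset.mem_union, Finset.mem_insert, Finset.mem_singleton,
    Finset.mem_image, Finset.mem_Icc]
  constructor
  · rintro ((h | h | ⟨m, hm, rfl⟩) | rfl)
    · exact Or.inl h
    · exact Or.inr (Or.inl h)
    · exact Or.inr (Or.inr ⟨m, ⟨hm.1, hm.2.trans (Nat.le_succ k)⟩, rfl⟩)
    · exact Or.inr (Or.inr ⟨k + 1, ⟨hk, le_refl _⟩, rfl⟩)
  · rintro (h | h | ⟨m, hm, rfl⟩)
    · exact Or.inl (Or.inl h)
    · exact Or.inl (Or.inr (Or.inl h))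
    · rcases Nat.lt_or_ge m (k + 1) with h1 | h1
      · exact Or.inl (Or.inr (Or.inr ⟨m, ⟨hm.1, by omega⟩, rfl⟩))
      · have : m = k + 1 := by omega
        subst this; exact Or.inr rfl

section clauses
variable (n : ℕ) (x p : ℕ → V) (y : V)

lemma memA {m : ℕ} (h1 : 1 ≤ m) (h2 : m < n) :
    ({(x m, false), (p m, true)} : Clause V) ∈ seqAMOCond n x p y := by
  rcases Nat.eq_or_lt_of_le h1 with rfl | h1'
  · exact Finset.mem_insert_self _ _
  · refine Finset.mem_insert_of_mem (Finset.mem_insert_of_mem ?_)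
    exact Finset.mem_biUnion.2 ⟨m, Finset.mem_Ioo.2 ⟨h1', h2⟩, by simp⟩

lemma memB {m : ℕ} (h1 : 1 < m) (h2 : m < n) :
    ({(p (m - 1), false), (p m, true)} : Clause V) ∈ seqAMOCond n x p y := by
  refine Finset.mem_insert_of_mem (Finset.mem_insert_of_mem ?_)
  exact Finset.mem_biUnion.2 ⟨m, Finset.mem_Ioo.2 ⟨h1, h2⟩, by simp⟩

lemma memD {m : ℕ} (h1 : 1 < m) (h2 : m ≤ n) :
    ({(y, false), (x m, false), (p (m - 1), false)} : Clause V) ∈ seqAMOCond n x p y := by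
  rcases Nat.eq_or_lt_of_le h2 with rfl | h2'
  · exact Finset.mem_insert_of_mem (Finset.mem_insert_self _ _)
  · refine Finset.mem_insert_of_mem (Finset.mem_insert_of_mem ?_)
    exact Finset.mem_biUnion.2 ⟨m, Finset.mem_Ioo.2 ⟨h1, h2'⟩, by simp⟩

end clauses

/-- filter of a 2-clause {(a,false),(b,true)} by ρ where (a,true)∈ρ, all of ρ true -/
lemma filter2 {a b : V} {ρ : Finset (Lit V)} (ha : ((a, true) : Lit V) ∈ ρ)
    (htrue : ∀ l ∈ ρ, l.2 = true) :
    (({(a, false), (b, true)} : Clause V).filter fun l => (l.1, !l.2) ∉ ρ)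
      = {(b, true)} := by
  ext l
  simp only [Finset.mem_filter, Finset.mem_insert, Finset.mem_singleton]
  constructor
  · rintro ⟨rfl | rfl, hf⟩
    · exact absurd ha hf
    · rfl
  · rintro rfl
    refine ⟨Or.inr rfl, fun hc => ?_⟩
    have := htrue _ hc
    simp at this
  
lemma filter3 {a b c : V} {ρ : Finset (Lit V)} (hb : ((b, true) : Lit V) ∈ ρ)
    (hc : ((c, true) : Lit V) ∈ ρ) (ha : ((a, true) : Lit V) ∉ ρ) :
    (({(a, false), (b, false), (c, false)} : Clause V).filter fun l => (l.1, !l.2) ∉ ρ)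
      = {(a, false)} := by
  ext l
  simp only [Finset.mem_filter, Finset.mem_insert, Finset.mem_singleton]
  constructor
  · rintro ⟨rfl | rfl | rfl, hf⟩
    · rfl
    · exact absurd hb hf
    · exact absurd hc hf
  · rintro rfl
    exact ⟨Or.inl rfl, by simpa using ha⟩

lemma notin2 {a b : V} {ρ : Finset (Lit V)} (hb : ((b, true) : Lit V) ∉ ρ)
    (htrue : ∀ l ∈ ρ, l.2 = true) :
    ∀ l ∈ ρ, l ∉ ({(a, false), (b, true)} : Clause V) := by
  intro l hl hlc
  have ht := htrue l hl
  simp only [Finset.mem_insert, Finset.mem_singleton] at hlc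
  rcases hlc with rfl | rfl
  · simp at ht
  · exact hb hl

lemma notin3 {a b c : V} {ρ : Finset (Lit V)} (htrue : ∀ l ∈ ρ, l.2 = true) :
    ∀ l ∈ ρ, l ∉ ({(a, false), (b, false), (c, false)} : Clause V) := by
  intro l hl hlc
  have ht := htrue l hl
  simp only [Finset.mem_insert, Finset.mem_singleton] at hlc
  rcases hlc with rfl | rfl | rfl <;> simp at ht

lemma stmt6aux (n : ℕ) (hn : 2 ≤ n) (x p : ℕ → V) (y : V)
    (hp : ∀ i ∈ Finset.Icc 1 (n - 1), ∀ j ∈ Finset.Icc 1 (n - 1), p i = p j → i = j)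
    (hxp : ∀ i ∈ Finset.Icc 1 n, ∀ j ∈ Finset.Icc 1 (n - 1), x i ≠ p j)
    (hxy : ∀ i ∈ Finset.Icc 1 n, x i ≠ y)
    (hpy : ∀ j ∈ Finset.Icc 1 (n - 1), p j ≠ y)
    (i j : ℕ) (hi : i ∈ Finset.Icc 1 n) (hj : j ∈ Finset.Icc 1 n) (hij : i < j) :
    ∀ d k, i ≤ k + 1 → k + 1 + d = j →
      UPDerives (restrict (seqAMOCond n x p y) (assn x p i j k)) (y, false) := by
  obtain ⟨hi1, hin⟩ := Finset.mem_Icc.1 hi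
  obtain ⟨hj1, hjn⟩ := Finset.mem_Icc.1 hj
  have htrue : ∀ k, ∀ l ∈ assn x p i j k, l.2 = true := fun k l hl => assn_true hl
  have hmemxj : ∀ k, ((x j, true) : Lit V) ∈ assn x p i j k := fun k =>
    Finset.mem_insert_of_mem (Finset.mem_insert_self _ _)
  have hmemxi : ∀ k, ((x i, true) : Lit V) ∈ assn x p i j k := fun k =>
    Finset.mem_insert_self _ _
  have hmemp : ∀ k m, i ≤ m → m ≤ k → ((p m, true) : Lit V) ∈ assn x p i j k := by
    intro k m h1 h2
    refine Finset.mem_insert_of_mem (Finset.mem_insert_of_mem ?_)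
    exact Finset.mem_image.2 ⟨m, Finset.mem_Icc.2 ⟨h1, h2⟩, rfl⟩
  have hnp : ∀ k m, 1 ≤ m → m ≤ n - 1 → k < m → ((p m, true) : Lit V) ∉ assn x p i j k := by
    intro k m h1 h2 h3 hc
    simp only [assn, Finset.mem_insert, Finset.mem_image, Finset.mem_Icc, Prod.mk.injEq,
      and_true] at hc
    rcases hc with h | h | ⟨m', hm', h⟩
    · exact hxp i hi m (Finset.mem_Icc.2 ⟨h1, h2⟩) h.symm
    · exact hxp j hj m (Finset.mem_Icc.2 ⟨h1, h2⟩) h.symm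
    · have : m' = m := hp m' (Finset.mem_Icc.2 ⟨by omega, by omega⟩)
        m (Finset.mem_Icc.2 ⟨h1, h2⟩) h
      omega
  have hny : ∀ k, k ≤ n - 1 → ((y, true) : Lit V) ∉ assn x p i j k := by
    intro k hk hc
    simp only [assn, Finset.mem_insert, Finset.mem_image, Finset.mem_Icc, Prod.mk.injEq,
      and_true] at hc
    rcases hc with h | h | ⟨m', hm', h⟩
    · exact hxy i hi h.symm
    · exact hxy j hj h.symm
    · exact hpy m' (Finset.mem_Icc.2 ⟨by omega, by omega⟩) h
  intro d
  induction d with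
  | zero =>
    intro k hk1 hk2
    have hjk : j = k + 1 := by omega
    subst hjk
    have hmem := mem_restrict (memD n x p y (m := k + 1) (by omega) (by omega))
      (notin3 (htrue k))
    simp only [Nat.add_sub_cancel] at hmem
    rw [filter3 (hmemxj k) (hmemp k k (by omega) le_rfl) (hny k (by omega))] at hmem
    exact UPDerives.unit hmem
  | succ d ih =>
    intro k hk1 hk2
    have hkj : k + 1 < j := by omega
    have hcond : ∀ l ∈ ({((p (k + 1), true) : Lit V)} : Finset (Lit V)),
        (l.1, !l.2) ∉ assn x p i j k := by
      intro l hl hc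
      rw [Finset.mem_singleton] at hl
      subst hl
      have := assn_true hc
      simp at this
    have hstep : UPDerives (restrict (restrict (seqAMOCond n x p y) (assn x p i j k))
        {((p (k + 1), true) : Lit V)}) (y, false) := by
      rw [restrict_union _ _ _ hcond, assn_succ x p i j k hk1]
      exact ih (k + 1) (by omega) (by omega)
    rcases Nat.eq_or_lt_of_le hk1 with hik | hik
    · -- k + 1 = i : use clause A_i
      have hax : ((x (k + 1), true) : Lit V) ∈ assn x p i j k := hik ▸ hmemxi k
      have hmem := mem_restrict (memA n x p y (m := k + 1) (by omega) (by omega))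
        (notin2 (hnp k (k + 1) (by omega) (by omega) (by omega)) (htrue k))
      rw [filter2 hax (htrue k)] at hmem
      exact UPDerives.step _ hmem hstep
    · -- i ≤ k : use clause B_{k+1}
      have hmem := mem_restrict (memB n x p y (m := k + 1) (by omega) (by omega))
        (notin2 (hnp k (k + 1) (by omega) (by omega) (by omega)) (htrue k))
      simp only [Nat.add_sub_cancel] at hmem
      rw [filter2 (hmemp k k (by omega) le_rfl) (htrue k)] at hmem
      exact UPDerives.step _ hmem hstep

/-- For the conditional sequential-counter AtMostOne encoding,
assigning any two distinct `x_i, x_j` (`i < j`) to true makes unit propagation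
derive `¬y` from the restricted formula. -/
theorem stmt6 {V : Type} [DecidableEq V] (n : ℕ) (hn : 2 ≤ n) (x p : ℕ → V) (y : V)
    (hx : ∀ i ∈ Finset.Icc 1 n, ∀ j ∈ Finset.Icc 1 n, x i = x j → i = j)
    (hp : ∀ i ∈ Finset.Icc 1 (n - 1), ∀ j ∈ Finset.Icc 1 (n - 1), p i = p j → i = j)
    (hxp : ∀ i ∈ Finset.Icc 1 n, ∀ j ∈ Finset.Icc 1 (n - 1), x i ≠ p j)
    (hxy : ∀ i ∈ Finset.Icc 1 n, x i ≠ y)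
    (hpy : ∀ j ∈ Finset.Icc 1 (n - 1), p j ≠ y)
    (i j : ℕ) (hi : i ∈ Finset.Icc 1 n) (hj : j ∈ Finset.Icc 1 n) (hij : i < j) :
    UPDerives (restrict (seqAMOCond n x p y) ({(x i, true), (x j, true)} : Finset (Lit V)))
      (y, false) := by
  have hi1 : 1 ≤ i := (Finset.mem_Icc.1 hi).1
  have h0 : ({((x i, true) : Lit V), (x j, true)} : Finset (Lit V)) = assn x p i j (i - 1) := by
    rw [assn, Finset.Icc_eq_empty (by omega : ¬ i ≤ i - 1)]
    simp
  rw [h0]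
  exact stmt6aux n hn x p y hp hxp hxy hpy i j hi hj hij (j - i) (i - 1)
    (by omega) (by omega)
end

section
/- Let n ≥ 2 and let Φ be the conditional sequential-counter AtMostOne encoding consisting of the clauses (¬x_1 ∨ p_1), (¬y ∨ ¬x_n ∨ ¬p_{n−1}), and for 1 < i < n the clauses (¬x_i ∨ p_i), (¬p_{i−1} ∨ p_i), (¬y ∨ ¬x_i ∨ ¬p_{i−1}). Then assigning y to true and any single x_i to true makes unit propagation derive ¬x_j from the restricted formula, for every index j ≠ i. -/
variable {V : Type} [DecidableEq V]

/-! Once `y` and `x_i` are true, the clause `¬y ∨ ¬x_i ∨ ¬p_{i-1}` is the unit `¬p_{i-1}` and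
`¬x_i ∨ p_i` is the unit `p_i`. The implications `p_{k-1} → p_k` then propagate `¬p_k` for every
`k < i` and `p_k` for every `k ≥ i`. For `j < i` the clause `¬x_j ∨ p_j` turns into `¬x_j`; for
`j > i` so does `¬y ∨ ¬x_j ∨ ¬p_{j-1}`, which has already lost `¬y`. -/

theorem filter_mem_restrict {Φ : CnfForm V} {ρ : Finset (Lit V)} {c : Clause V}
    (hc : c ∈ Φ) (hρc : ∀ l ∈ ρ, l ∉ c) :
    c.filter (fun l => (l.1, !l.2) ∉ ρ) ∈ restrict Φ ρ :=
  Finset.mem_image.mpr ⟨c, Finset.mem_filter.mpr ⟨hc, hρc⟩, rfl⟩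

theorem mem_restrict_singleton_of_forall_ne {Φ : CnfForm V} {l : Lit V} {c : Clause V}
    (hc : c ∈ Φ) (h : ∀ m ∈ c, m.1 ≠ l.1) : c ∈ restrict Φ {l} := by
  have hc' := filter_mem_restrict (ρ := {l}) hc fun m hm hmc =>
    h m hmc (by rw [Finset.mem_singleton.mp hm])
  rwa [Finset.filter_true_of_mem] at hc'
  intro m hm hml
  exact h m hm (by rw [← Finset.mem_singleton.mp hml])

theorem singleton_mem_restrict_singleton {Φ : CnfForm V} {l t : Lit V}
    (h : ({t, (l.1, !l.2)} : Clause V) ∈ Φ) (ht : t.1 ≠ l.1) :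
    ({t} : Clause V) ∈ restrict Φ {l} := by
  have hc := filter_mem_restrict (ρ := {l}) h fun m hm hmc => by
    obtain rfl := Finset.mem_singleton.mp hm
    simp_all [Prod.ext_iff]
  rwa [Finset.filter_insert, if_pos (by simp_all [Prod.ext_iff]), Finset.filter_singleton,
    if_neg (by simp)] at hc

theorem UPDerives.of_implication_chain {Φ : CnfForm V} {t : Lit V} (d : ℕ) (g : ℕ → Lit V)
    (hinj : ∀ k ≤ d, ∀ k' ≤ d, (g k).1 = (g k').1 → k = k')
    (ht : ∀ k ≤ d, (g k).1 ≠ t.1)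
    (h0 : ({g 0} : Clause V) ∈ Φ)
    (hstep : ∀ k < d, ({g (k + 1), ((g k).1, !(g k).2)} : Clause V) ∈ Φ)
    (hlast : ({t, ((g d).1, !(g d).2)} : Clause V) ∈ Φ) :
    UPDerives Φ t := by
  induction d generalizing g Φ with
  | zero =>
    exact .step (g 0) h0 (.unit (singleton_mem_restrict_singleton hlast (ht 0 le_rfl).symm))
  | succ d ih =>
    have hne : ∀ k ≤ d, (g (k + 1)).1 ≠ (g 0).1 := fun k hk h => by
      have := hinj _ (by omega) 0 (by omega) h
      omega
    refine .step (g 0) h0 (ih (fun k => g (k + 1)) ?_ ?_ ?_ ?_ ?_)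
    · exact fun k hk k' hk' h => by
        have := hinj _ (by omega) _ (by omega) h
        omega
    · exact fun k hk => ht _ (by omega)
    · exact singleton_mem_restrict_singleton (hstep 0 (by omega)) (hne 0 (by omega))
    · refine fun k hk => mem_restrict_singleton_of_forall_ne (hstep (k + 1) (by omega)) ?_
      simpa using ⟨hne (k + 1) (by omega), hne k (by omega)⟩
    · refine mem_restrict_singleton_of_forall_ne hlast ?_
      simpa using ⟨fun h => ht 0 (by omega) h.symm, hne d le_rfl⟩

section SeqAMOCond

variable {n : ℕ} {x p : ℕ → V} {y : V}

theorem neg_x_or_p_mem_seqAMOCond {k : ℕ} (hk : 1 ≤ k) (hkn : k < n) :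
    ({(x k, false), (p k, true)} : Clause V) ∈ seqAMOCond n x p y := by
  rcases hk.eq_or_lt with rfl | hk
  · exact Finset.mem_insert_self _ _
  · simp only [seqAMOCond, Finset.mem_insert, Finset.mem_biUnion, Finset.mem_Ioo]
    exact .inr (.inr ⟨k, ⟨hk, hkn⟩, by simp⟩)

theorem neg_p_or_p_mem_seqAMOCond {k : ℕ} (hk : 1 ≤ k) (hkn : k + 1 < n) :
    ({(p k, false), (p (k + 1), true)} : Clause V) ∈ seqAMOCond n x p y := by
  simp only [seqAMOCond, Finset.mem_insert, Finset.mem_biUnion, Finset.mem_Ioo]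
  exact .inr (.inr ⟨k + 1, ⟨by omega, hkn⟩, by simp⟩)

theorem neg_y_or_neg_x_or_neg_p_mem_seqAMOCond {k : ℕ} (hk : 2 ≤ k) (hkn : k ≤ n) :
    ({(y, false), (x k, false), (p (k - 1), false)} : Clause V) ∈ seqAMOCond n x p y := by
  simp only [seqAMOCond, Finset.mem_insert, Finset.mem_biUnion, Finset.mem_Ioo]
  rcases hkn.eq_or_lt with rfl | hkn
  · exact .inr (.inl rfl)
  · exact .inr (.inr ⟨k, ⟨by omega, hkn⟩, by simp⟩)

variable {i : ℕ}

theorem unit_neg_p_mem_restrict_seqAMOCond (hi : 2 ≤ i) (hin : i ≤ n)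
    (hpy : p (i - 1) ≠ y) (hpx : p (i - 1) ≠ x i) :
    ({(p (i - 1), false)} : Clause V) ∈
      restrict (seqAMOCond n x p y) {(y, true), (x i, true)} := by
  convert filter_mem_restrict (neg_y_or_neg_x_or_neg_p_mem_seqAMOCond hi hin) ?_ using 1 <;>
    simp [Finset.filter_insert, Finset.filter_singleton, hpy, hpx, hpy.symm, hpx.symm]

theorem unit_p_mem_restrict_seqAMOCond (hi : 1 ≤ i) (hin : i < n)
    (hpy : p i ≠ y) (hpx : p i ≠ x i) :
    ({(p i, true)} : Clause V) ∈ restrict (seqAMOCond n x p y) {(y, true), (x i, true)} := by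
  convert filter_mem_restrict (neg_x_or_p_mem_seqAMOCond hi hin) ?_ using 1 <;>
    simp [Finset.filter_insert, Finset.filter_singleton, hpy, hpx, hpy.symm, hpx.symm]

theorem neg_p_or_p_mem_restrict_seqAMOCond {k : ℕ} (hk : 1 ≤ k) (hkn : k + 1 < n)
    (hpy : p k ≠ y) (hpx : p k ≠ x i) (hpy' : p (k + 1) ≠ y) (hpx' : p (k + 1) ≠ x i) :
    ({(p k, false), (p (k + 1), true)} : Clause V) ∈
      restrict (seqAMOCond n x p y) {(y, true), (x i, true)} := by
  convert filter_mem_restrict (neg_p_or_p_mem_seqAMOCond hk hkn) ?_ using 1 <;>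
    simp [Finset.filter_insert, Finset.filter_singleton, hpy, hpx, hpy', hpx',
      hpy.symm, hpx.symm, hpy'.symm, hpx'.symm]

theorem neg_x_or_p_mem_restrict_seqAMOCond {j : ℕ} (hj : 1 ≤ j) (hjn : j < n)
    (hxy : x j ≠ y) (hxx : x j ≠ x i) (hpy : p j ≠ y) (hpx : p j ≠ x i) :
    ({(x j, false), (p j, true)} : Clause V) ∈
      restrict (seqAMOCond n x p y) {(y, true), (x i, true)} := by
  convert filter_mem_restrict (neg_x_or_p_mem_seqAMOCond hj hjn) ?_ using 1 <;>
    simp [Finset.filter_insert, Finset.filter_singleton, hxy, hxx, hpy, hpx, hpy.symm, hpx.symm]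

theorem neg_x_or_neg_p_mem_restrict_seqAMOCond {j : ℕ} (hj : 2 ≤ j) (hjn : j ≤ n)
    (hxy : x j ≠ y) (hxx : x j ≠ x i) (hpy : p (j - 1) ≠ y) (hpx : p (j - 1) ≠ x i) :
    ({(x j, false), (p (j - 1), false)} : Clause V) ∈
      restrict (seqAMOCond n x p y) {(y, true), (x i, true)} := by
  convert filter_mem_restrict (neg_y_or_neg_x_or_neg_p_mem_seqAMOCond hj hjn) ?_ using 1 <;>
    simp [Finset.filter_insert, Finset.filter_singleton, hxy, hxx, hpy, hpx, hpy.symm, hpx.symm]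

theorem upDerives_neg_x_of_lt {j : ℕ} (hj : 1 ≤ j) (hji : j < i) (hin : i ≤ n)
    (hp : Set.InjOn p (Set.Ico 1 n)) (hpy : ∀ k ∈ Set.Ico 1 n, p k ≠ y)
    (hpxi : ∀ k ∈ Set.Ico 1 n, p k ≠ x i) (hpxj : ∀ k ∈ Set.Ico 1 n, p k ≠ x j)
    (hxy : x j ≠ y) (hxx : x j ≠ x i) :
    UPDerives (restrict (seqAMOCond n x p y) {(y, true), (x i, true)}) (x j, false) := by
  apply UPDerives.of_implication_chain (i - 1 - j) fun k => (p (i - 1 - k), false)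
  · intro k hk k' hk' h
    have := hp ⟨by omega, by omega⟩ ⟨by omega, by omega⟩ h
    omega
  · exact fun k hk => hpxj _ ⟨by omega, by omega⟩
  · simpa using unit_neg_p_mem_restrict_seqAMOCond (by omega) hin
      (hpy _ ⟨by omega, by omega⟩) (hpxi _ ⟨by omega, by omega⟩)
  · intro k hk
    rw [show i - 1 - k = i - 1 - (k + 1) + 1 by omega]
    exact neg_p_or_p_mem_restrict_seqAMOCond (by omega) (by omega)
      (hpy _ ⟨by omega, by omega⟩) (hpxi _ ⟨by omega, by omega⟩)
      (hpy _ ⟨by omega, by omega⟩) (hpxi _ ⟨by omega, by omega⟩)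
  · rw [show i - 1 - (i - 1 - j) = j by omega]
    exact neg_x_or_p_mem_restrict_seqAMOCond hj (by omega) hxy hxx
      (hpy _ ⟨hj, by omega⟩) (hpxi _ ⟨hj, by omega⟩)

theorem upDerives_neg_x_of_gt {j : ℕ} (hi : 1 ≤ i) (hij : i < j) (hjn : j ≤ n)
    (hp : Set.InjOn p (Set.Ico 1 n)) (hpy : ∀ k ∈ Set.Ico 1 n, p k ≠ y)
    (hpxi : ∀ k ∈ Set.Ico 1 n, p k ≠ x i) (hpxj : ∀ k ∈ Set.Ico 1 n, p k ≠ x j)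
    (hxy : x j ≠ y) (hxx : x j ≠ x i) :
    UPDerives (restrict (seqAMOCond n x p y) {(y, true), (x i, true)}) (x j, false) := by
  apply UPDerives.of_implication_chain (j - 1 - i) fun k => (p (i + k), true)
  · intro k hk k' hk' h
    have := hp ⟨by omega, by omega⟩ ⟨by omega, by omega⟩ h
    omega
  · exact fun k hk => hpxj _ ⟨by omega, by omega⟩
  · simpa using unit_p_mem_restrict_seqAMOCond hi (by omega)
      (hpy _ ⟨hi, by omega⟩) (hpxi _ ⟨hi, by omega⟩)
  · intro k hk
    show ({(p (i + (k + 1)), true), (p (i + k), false)} : Clause V) ∈ _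
    rw [Finset.pair_comm (p _, true), ← add_assoc]
    exact neg_p_or_p_mem_restrict_seqAMOCond (by omega) (by omega)
      (hpy _ ⟨by omega, by omega⟩) (hpxi _ ⟨by omega, by omega⟩)
      (hpy _ ⟨by omega, by omega⟩) (hpxi _ ⟨by omega, by omega⟩)
  · show ({(x j, false), (p (i + (j - 1 - i)), false)} : Clause V) ∈ _
    rw [show i + (j - 1 - i) = j - 1 by omega]
    exact neg_x_or_neg_p_mem_restrict_seqAMOCond (by omega) hjn hxy hxx
      (hpy _ ⟨by omega, by omega⟩) (hpxi _ ⟨by omega, by omega⟩)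

end SeqAMOCond

theorem stmt7_general {V : Type} [DecidableEq V] (n : ℕ) (x p : ℕ → V) (y : V)
    (hx : ∀ i ∈ Finset.Icc 1 n, ∀ j ∈ Finset.Icc 1 n, x i = x j → i = j)
    (hp : ∀ i ∈ Finset.Icc 1 (n - 1), ∀ j ∈ Finset.Icc 1 (n - 1), p i = p j → i = j)
    (hxp : ∀ i ∈ Finset.Icc 1 n, ∀ j ∈ Finset.Icc 1 (n - 1), x i ≠ p j)
    (hxy : ∀ i ∈ Finset.Icc 1 n, x i ≠ y)
    (hpy : ∀ j ∈ Finset.Icc 1 (n - 1), p j ≠ y)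
    (i : ℕ) (hi : i ∈ Finset.Icc 1 n) :
    ∀ j ∈ Finset.Icc 1 n, j ≠ i →
      UPDerives (restrict (seqAMOCond n x p y) ({(y, true), (x i, true)} : Finset (Lit V)))
        (x j, false) := by
  intro j hj hji
  have hIco : ∀ k ∈ Set.Ico 1 n, k ∈ Finset.Icc 1 (n - 1) := fun k hk =>
    Finset.mem_Icc.mpr ⟨hk.1, by have := hk.2; omega⟩
  have hpinj : Set.InjOn p (Set.Ico 1 n) := fun k hk k' hk' => hp k (hIco k hk) k' (hIco k' hk')
  have hpy' : ∀ k ∈ Set.Ico 1 n, p k ≠ y := fun k hk => hpy k (hIco k hk)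
  have hpx : ∀ m ∈ Finset.Icc 1 n, ∀ k ∈ Set.Ico 1 n, p k ≠ x m := fun m hm k hk =>
    (hxp m hm k (hIco k hk)).symm
  have hxx : x j ≠ x i := fun h => hji (hx j hj i hi h)
  rcases hji.lt_or_gt with hji | hij
  · exact upDerives_neg_x_of_lt (Finset.mem_Icc.mp hj).1 hji (Finset.mem_Icc.mp hi).2
      hpinj hpy' (hpx i hi) (hpx j hj) (hxy j hj) hxx
  · exact upDerives_neg_x_of_gt (Finset.mem_Icc.mp hi).1 hij (Finset.mem_Icc.mp hj).2
      hpinj hpy' (hpx i hi) (hpx j hj) (hxy j hj) hxx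

/-- For the conditional sequential-counter AtMostOne encoding,
assigning `y` to true and any single `x_i` to true makes unit propagation derive
`¬x_j` from the restricted formula, for every index `j ≠ i`. -/
theorem stmt7 {V : Type} [DecidableEq V] (n : ℕ) (hn : 2 ≤ n) (x p : ℕ → V) (y : V)
    (hx : ∀ i ∈ Finset.Icc 1 n, ∀ j ∈ Finset.Icc 1 n, x i = x j → i = j)
    (hp : ∀ i ∈ Finset.Icc 1 (n - 1), ∀ j ∈ Finset.Icc 1 (n - 1), p i = p j → i = j)
    (hxp : ∀ i ∈ Finset.Icc 1 n, ∀ j ∈ Finset.Icc 1 (n - 1), x i ≠ p j)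
    (hxy : ∀ i ∈ Finset.Icc 1 n, x i ≠ y)
    (hpy : ∀ j ∈ Finset.Icc 1 (n - 1), p j ≠ y)
    (i : ℕ) (hi : i ∈ Finset.Icc 1 n) :
    ∀ j ∈ Finset.Icc 1 n, j ≠ i →
      UPDerives (restrict (seqAMOCond n x p y) ({(y, true), (x i, true)} : Finset (Lit V)))
        (x j, false) :=
  stmt7_general n x p y hx hp hxp hxy hpy i hi
end

section
/- Let n ≥ 2 and let Φ be the conditional sequential-counter AtMostOne encoding consisting of the clauses (¬x_1 ∨ p_1), (¬y ∨ ¬x_n ∨ ¬p_{n−1}), and for 1 < i < n the clauses (¬x_i ∨ p_i), (¬p_{i−1} ∨ p_i), (¬y ∨ ¬x_i ∨ ¬p_{i−1}). Then a complete assignment ν of truth values to the variables y, x_1, …, x_n extends to an assignment of p_1, …, p_{n−1} satisfying every clause of Φ if and only if ν(y) = true implies that at most one of ν(x_1), …, ν(x_n) is true. -/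
variable {V : Type} [DecidableEq V]

lemma mem_seq1 (n : ℕ) (x p : ℕ → V) (y : V) :
    ({(x 1, false), (p 1, true)} : Clause V) ∈ seqAMOCond n x p y := by
  simp [seqAMOCond]

lemma mem_seq2 (n : ℕ) (x p : ℕ → V) (y : V) :
    ({(y, false), (x n, false), (p (n-1), false)} : Clause V) ∈ seqAMOCond n x p y := by
  simp [seqAMOCond]

lemma mem_seq3a {n i : ℕ} (hi : i ∈ Finset.Ioo 1 n) (x p : ℕ → V) (y : V) :
    ({(x i, false), (p i, true)} : Clause V) ∈ seqAMOCond n x p y := by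
  simp only [seqAMOCond, Finset.mem_insert, Finset.mem_biUnion]
  exact Or.inr (Or.inr ⟨i, hi, by simp⟩)

lemma mem_seq3b {n i : ℕ} (hi : i ∈ Finset.Ioo 1 n) (x p : ℕ → V) (y : V) :
    ({(p (i-1), false), (p i, true)} : Clause V) ∈ seqAMOCond n x p y := by
  simp only [seqAMOCond, Finset.mem_insert, Finset.mem_biUnion]
  exact Or.inr (Or.inr ⟨i, hi, by simp⟩)

lemma mem_seq3c {n i : ℕ} (hi : i ∈ Finset.Ioo 1 n) (x p : ℕ → V) (y : V) :
    ({(y, false), (x i, false), (p (i-1), false)} : Clause V) ∈ seqAMOCond n x p y := by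
  simp only [seqAMOCond, Finset.mem_insert, Finset.mem_biUnion]
  exact Or.inr (Or.inr ⟨i, hi, by simp⟩)

/-- A complete assignment `ν` of the variables `y, x_1, …, x_n` extends
to an assignment of `p_1, …, p_{n-1}` satisfying every clause of the conditional
sequential-counter AtMostOne encoding iff `ν y = true` implies at most one of the
`ν (x i)` is true. -/
theorem stmt8 {V : Type} [DecidableEq V] (n : ℕ) (hn : 2 ≤ n) (x p : ℕ → V) (y : V)
    (hx : ∀ i ∈ Finset.Icc 1 n, ∀ j ∈ Finset.Icc 1 n, x i = x j → i = j)
    (hp : ∀ i ∈ Finset.Icc 1 (n - 1), ∀ j ∈ Finset.Icc 1 (n - 1), p i = p j → i = j)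
    (hxp : ∀ i ∈ Finset.Icc 1 n, ∀ j ∈ Finset.Icc 1 (n - 1), x i ≠ p j)
    (hxy : ∀ i ∈ Finset.Icc 1 n, x i ≠ y)
    (hpy : ∀ j ∈ Finset.Icc 1 (n - 1), p j ≠ y)
    (ν : V → Bool) :
    (∃ μ : V → Bool, μ y = ν y ∧ (∀ i ∈ Finset.Icc 1 n, μ (x i) = ν (x i)) ∧
        ∀ c ∈ seqAMOCond n x p y, ∃ l ∈ c, μ l.1 = l.2) ↔
      (ν y = true → ((Finset.Icc 1 n).filter fun i => ν (x i) = true).card ≤ 1) := by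
  constructor
  · rintro ⟨μ, hμy, hμx, hsat⟩ hy
    rw [Finset.card_le_one]
    by_contra hcard
    push_neg at hcard
    obtain ⟨a, ha, b, hb, hab⟩ := hcard
    simp only [Finset.mem_filter] at ha hb
    -- key : two true x's give a contradiction
    have key : ∀ j k : ℕ, j ∈ Finset.Icc 1 n → k ∈ Finset.Icc 1 n → j < k →
        ν (x j) = true → ν (x k) = true → False := by
      intro j k hj hk hjk hxj hxk
      simp only [Finset.mem_Icc] at hj hk
      have chain : ∀ i, j ≤ i → i ≤ n - 1 → μ (p i) = true := by
        intro i hji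
        induction i, hji using Nat.le_induction with
        | base =>
          intro hle
          rcases eq_or_lt_of_le hj.1 with h1 | h1
          · subst h1
            have h := hsat _ (mem_seq1 n x p y)
            simp only [Finset.mem_insert, Finset.mem_singleton, exists_eq_or_imp,
              exists_eq_left] at h
            rcases h with h | h
            · rw [hμx 1 (by simp; omega), hxj] at h; exact absurd h (by simp)
            · exact h
          · have h := hsat _ (mem_seq3a (n := n) (i := j) (by simp; omega) x p y)
            simp only [Finset.mem_insert, Finset.mem_singleton, exists_eq_or_imp,
              exists_eq_left] at h
            rcases h with h | h
            · rw [hμx j (by simp; omega), hxj] at h; exact absurd h (by simp)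
            · exact h
        | succ i hji ih =>
          intro hle
          have h := hsat _ (mem_seq3b (n := n) (i := i + 1) (by simp; omega) x p y)
          simp only [Nat.add_sub_cancel, Finset.mem_insert, Finset.mem_singleton,
            exists_eq_or_imp, exists_eq_left] at h
          rcases h with h | h
          · rw [ih (by omega)] at h; exact absurd h (by simp)
          · exact h
      have hpk : μ (p (k - 1)) = true := chain (k - 1) (by omega) (by omega)
      rcases eq_or_lt_of_le hk.2 with h2 | h2
      · have h := hsat _ (mem_seq2 n x p y)
        simp only [Finset.mem_insert, Finset.mem_singleton, exists_eq_or_imp,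
          exists_eq_left] at h
        rcases h with h | h | h
        · rw [hμy, hy] at h; exact absurd h (by simp)
        · rw [hμx n (by simp; omega), ← h2, hxk] at h; exact absurd h (by simp)
        · rw [h2] at hpk; rw [hpk] at h; exact absurd h (by simp)
      · have h := hsat _ (mem_seq3c (n := n) (i := k) (by simp; omega) x p y)
        simp only [Finset.mem_insert, Finset.mem_singleton, exists_eq_or_imp,
          exists_eq_left] at h
        rcases h with h | h | h
        · rw [hμy, hy] at h; exact absurd h (by simp)
        · rw [hμx k (by simp; omega), hxk] at h; exact absurd h (by simp)
        · rw [hpk] at h; exact absurd h (by simp)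
    rcases lt_trichotomy a b with h | h | h
    · exact key a b ha.1 hb.1 h ha.2 hb.2
    · exact hab h
    · exact key b a hb.1 ha.1 h hb.2 ha.2
  · intro hamo
    classical
    set μ : V → Bool := fun v =>
        if ∃ j ∈ Finset.Icc 1 (n-1), p j = v then
          decide (∃ j ∈ Finset.Icc 1 (n-1), p j = v ∧ ∃ k ∈ Finset.Icc 1 j, ν (x k) = true)
        else ν v with hμdef
    have hμy : μ y = ν y := by
      rw [hμdef]; simp only; rw [if_neg]; push_neg; exact hpy
    have hμx : ∀ i ∈ Finset.Icc 1 n, μ (x i) = ν (x i) := by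
      intro i hi; rw [hμdef]; simp only; rw [if_neg]
      push_neg; exact fun j hj => Ne.symm (hxp i hi j hj)
    have hμp : ∀ i ∈ Finset.Icc 1 (n-1),
        (μ (p i) = true ↔ ∃ k ∈ Finset.Icc 1 i, ν (x k) = true) := by
      intro i hi
      rw [hμdef]; simp only; rw [if_pos ⟨i, hi, rfl⟩]
      simp only [decide_eq_true_eq]
      constructor
      · rintro ⟨j, hj, hpj, hk⟩
        rwa [hp j hj i hi hpj] at hk
      · intro hk; exact ⟨i, hi, rfl, hk⟩
    have hcond : ∀ i, 2 ≤ i → i ≤ n →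
        ∃ l ∈ ({(y, false), (x i, false), (p (i-1), false)} : Clause V), μ l.1 = l.2 := by
      intro i h2 hin
      by_cases hy : ν y = true
      · by_cases hxi : ν (x i) = true
        · have hpf : μ (p (i-1)) ≠ true := by
            intro hcontr
            obtain ⟨k, hk, hxk⟩ := (hμp (i-1) (by simp; omega)).mp hcontr
            simp only [Finset.mem_Icc] at hk
            have h1 := Finset.card_le_one.mp (hamo hy) k
              (Finset.mem_filter.mpr ⟨by simp; omega, hxk⟩) i
              (Finset.mem_filter.mpr ⟨by simp; omega, hxi⟩)
            omega
          refine ⟨(p (i-1), false), by simp, ?_⟩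
          simpa using hpf
        · refine ⟨(x i, false), by simp, ?_⟩
          rw [hμx i (by simp; omega)]; simpa using hxi
      · exact ⟨(y, false), by simp, by rw [hμy]; simpa using hy⟩
    have himp : ∀ i, 1 ≤ i → i ≤ n - 1 →
        ∃ l ∈ ({(x i, false), (p i, true)} : Clause V), μ l.1 = l.2 := by
      intro i h1 hin
      by_cases hxi : ν (x i) = true
      · refine ⟨(p i, true), by simp, ?_⟩
        rw [hμp i (by simp; omega)]
        exact ⟨i, by simp; omega, hxi⟩
      · refine ⟨(x i, false), by simp, ?_⟩
        rw [hμx i (by simp; omega)]; simpa using hxi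
    refine ⟨μ, hμy, hμx, ?_⟩
    intro c hc
    simp only [seqAMOCond, Finset.mem_insert, Finset.mem_biUnion,
      Finset.mem_singleton] at hc
    rcases hc with rfl | rfl | ⟨i, hi, rfl | rfl | rfl⟩
    · exact himp 1 le_rfl (by omega)
    · exact hcond n hn le_rfl
    · simp only [Finset.mem_Ioo] at hi
      exact himp i (by omega) (by omega)
    · simp only [Finset.mem_Ioo] at hi
      by_cases hpi : μ (p (i-1)) = true
      · refine ⟨(p i, true), by simp, ?_⟩
        rw [hμp i (by simp; omega)]
        obtain ⟨k, hk, hxk⟩ := (hμp (i-1) (by simp; omega)).mp hpi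
        simp only [Finset.mem_Icc] at hk
        exact ⟨k, by simp; omega, hxk⟩
      · refine ⟨(p (i-1), false), by simp, ?_⟩
        simpa using hpi
    · simp only [Finset.mem_Ioo] at hi
      exact hcond i (by omega) (by omega)
end

section
/- Let 1 ≤ k ≤ n and let Φ be the conditional pigeon-hole encoding of y → (x_1 + ⋯ + x_n ≥ k), consisting of: for 1 ≤ i ≤ k the clause (¬y ∨ p_{i,1} ∨ ⋯ ∨ p_{i,n−k+1}); for 1 ≤ i ≤ k and 1 ≤ j ≤ n−k+1 the clause (x_{i+j−1} ∨ ¬p_{i,j}); and for 1 ≤ i < k and 1 ≤ j < n−k+1 the clause (¬p_{i+1,j} ∨ p_{i,1} ∨ ⋯ ∨ p_{i,j}). Then assigning y to true and any n−k distinct variables among x_1, …, x_n to false makes unit propagation derive x_j from the restricted formula for every remaining index j. -/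
variable {V : Type} [DecidableEq V]

/-- The conditional pigeon-hole encoding of `y → (x_1 + ⋯ + x_n ≥ k)`:
for `1 ≤ i ≤ k` the clause `(¬y ∨ p_{i,1} ∨ ⋯ ∨ p_{i,n-k+1})`;
for `1 ≤ i ≤ k`, `1 ≤ j ≤ n-k+1` the clause `(x_{i+j-1} ∨ ¬p_{i,j})`;
for `1 ≤ i < k`, `1 ≤ j < n-k+1` the clause `(¬p_{i+1,j} ∨ p_{i,1} ∨ ⋯ ∨ p_{i,j})`. -/
def phpCond (n k : ℕ) (x : ℕ → V) (p : ℕ → ℕ → V) (y : V) : CnfForm V :=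
  ((Finset.Icc 1 k).image fun i =>
      insert ((y, false) : Lit V)
        ((Finset.Icc 1 (n - k + 1)).image fun j => ((p i j, true) : Lit V)))
  ∪ ((Finset.Icc 1 k ×ˢ Finset.Icc 1 (n - k + 1)).image fun q =>
      ({(x (q.1 + q.2 - 1), true), (p q.1 q.2, false)} : Clause V))
  ∪ ((Finset.Icc 1 (k - 1) ×ˢ Finset.Icc 1 (n - k)).image fun q =>
      insert ((p (q.1 + 1) q.2, false) : Lit V)
        ((Finset.Icc 1 q.2).image fun l => ((p q.1 l, true) : Lit V)))

/-!
Let `σ 1 < ⋯ < σ k` enumerate the indices of the unassigned variables `x`, so that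
`i ≤ σ i ≤ n - k + i`. Unit propagation first sets `p_{i,l}` false, row by row, whenever
`x_{i+l-1}` is false (binary clause) or comes before `x_{σ i}` (then it is some `x_{σ m}`
with `m < i`, and the transition clause of row `i - 1` is unit). Then for `i = k, k - 1, …`
the only literal left in row `i` (of the row clause, or of the transition clause triggered
by `p_{i+1, σ(i+1)-i}`) is `p_{i, σ i - i + 1}`, and the binary clause
`x_{σ i} ∨ ¬p_{i, σ i - i + 1}` yields `x_{σ i}`.
-/

section UnitPropagation

variable {V : Type} {Φ : CnfForm V} {ρ ρ' : Finset (Lit V)} {m : Lit V}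

def Consistent (ρ : Finset (Lit V)) : Prop := ∀ l ∈ ρ, (l.1, !l.2) ∉ ρ

def UnitImplied (Φ : CnfForm V) (ρ : Finset (Lit V)) (m : Lit V) : Prop :=
  ∃ c ∈ Φ, m ∈ c ∧ ∀ l ∈ c, l ≠ m → (l.1, !l.2) ∈ ρ

theorem UnitImplied.mono (h : UnitImplied Φ ρ m) (hρ : ρ ⊆ ρ') : UnitImplied Φ ρ' m := by
  obtain ⟨c, hc, hm, hfalse⟩ := h
  exact ⟨c, hc, hm, fun l hl hne => hρ (hfalse l hl hne)⟩

theorem consistent_of_forall_snd_eq {b : Bool} (h : ∀ l ∈ ρ, l.2 = b) : Consistent ρ :=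
  fun l hl hneg => absurd (h _ hneg) (by rw [← h l hl]; simp)

variable [DecidableEq V]

theorem Consistent.insert (hρ : Consistent ρ) (hm : (m.1, !m.2) ∉ ρ) : Consistent (insert m ρ) := by
  intro l hl hneg
  rcases Finset.mem_insert.1 hl with rfl | hl <;> rcases Finset.mem_insert.1 hneg with h | h
  · simp [Prod.ext_iff] at h
  · exact hm h
  · exact hm (by rw [← h]; simpa using hl)
  · exact hρ l hl h

theorem mem_restrict_iff {c' : Clause V} :
    c' ∈ restrict Φ ρ ↔ ∃ c ∈ Φ, (∀ l ∈ ρ, l ∉ c) ∧ c.filter (fun l => (l.1, !l.2) ∉ ρ) = c' := by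
  simp [restrict, and_assoc]

theorem restrict_restrict_singleton (hneg : (m.1, !m.2) ∉ ρ) :
    restrict (restrict Φ ρ) {m} = restrict Φ (insert m ρ) := by
  ext c'
  simp only [mem_restrict_iff, Finset.mem_singleton, forall_eq, Finset.mem_insert,
    forall_eq_or_imp]
  constructor
  · rintro ⟨_, ⟨c, hc, hρc, rfl⟩, hmc, rfl⟩
    refine ⟨c, hc, ⟨fun h => hmc (Finset.mem_filter.2 ⟨h, hneg⟩), hρc⟩, ?_⟩
    rw [Finset.filter_filter]
    exact Finset.filter_congr fun l _ => by tauto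
  · rintro ⟨c, hc, ⟨hmc, hρc⟩, rfl⟩
    refine ⟨_, ⟨c, hc, hρc, rfl⟩, fun h => hmc (Finset.mem_filter.1 h).1, ?_⟩
    rw [Finset.filter_filter]
    exact Finset.filter_congr fun l _ => by tauto

theorem filter_singleton_mem_restrict_of_unitImplied (hρ : Consistent ρ)
    (h : UnitImplied Φ ρ m) (hm : m ∉ ρ) :
    ({m} : Clause V).filter (fun l => (l.1, !l.2) ∉ ρ) ∈ restrict Φ ρ := by
  obtain ⟨c, hc, hmc, hfalse⟩ := h
  refine mem_restrict_iff.2 ⟨c, hc, fun l hl hlc => ?_, ?_⟩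
  · by_cases hlm : l = m
    · exact hm (hlm ▸ hl)
    · exact hρ l hl (hfalse l hlc hlm)
  · ext l
    simp only [Finset.mem_filter, Finset.mem_singleton]
    constructor
    · rintro ⟨hlc, hl⟩
      refine ⟨?_, hl⟩
      by_contra hlm
      exact hl (hfalse l hlc hlm)
    · rintro ⟨rfl, hl⟩
      exact ⟨hmc, hl⟩

theorem UPDerives.of_unitImplied (hρ : Consistent ρ) (h : UnitImplied Φ ρ m) (hm : m ∉ ρ) :
    UPDerives (restrict Φ ρ) m := by
  have := filter_singleton_mem_restrict_of_unitImplied hρ h hm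
  rw [Finset.filter_singleton] at this
  split_ifs at this
  · exact .bot this
  · exact .unit this

theorem union_image_subset_insert_union_image_erase {ι : Type} [DecidableEq ι] (f : ι → Lit V)
    (ρ : Finset (Lit V)) (s : Finset ι) (a : ι) :
    ρ ∪ s.image f ⊆ insert (f a) ρ ∪ (s.erase a).image f := by
  rw [Finset.insert_union, ← Finset.union_insert, ← Finset.image_insert]
  exact Finset.union_subset_union_right (Finset.image_subset_image (Finset.insert_erase_subset a s))

-- A scheduled literal that is already assigned is skipped; one whose complement is assigned
-- leaves its clause empty.
theorem UPDerives.of_schedule {ι : Type} [DecidableEq ι] (f : ι → Lit V) (r : ι → ℕ)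
    (tgt : Lit V) (D : Finset ι) (ρ : Finset (Lit V)) (hρ : Consistent ρ)
    (hD : ∀ d ∈ D, UnitImplied Φ (ρ ∪ (D.filter fun e => r e < r d).image f) (f d))
    (htgt : UnitImplied Φ (ρ ∪ D.image f) tgt) (htgtρ : tgt ∉ ρ) :
    UPDerives (restrict Φ ρ) tgt := by
  induction D using Finset.strongInduction generalizing ρ with
  | H D ih =>
  rcases D.eq_empty_or_nonempty with rfl | hne
  · exact .of_unitImplied hρ (by simpa using htgt) htgtρ
  obtain ⟨d₀, hd₀, hmin⟩ := D.exists_min_image r hne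
  set m := f d₀
  have hm : UnitImplied Φ ρ m := by
    have hlow : (D.filter fun e => r e < r d₀) = ∅ :=
      Finset.filter_false_of_mem fun e he => not_lt.2 (hmin e he)
    simpa [hlow] using hD d₀ hd₀
  have hD' : ∀ d ∈ D.erase d₀, UnitImplied Φ
      (insert m ρ ∪ ((D.erase d₀).filter fun e => r e < r d).image f) (f d) := fun d hd =>
    (hD d (Finset.mem_of_mem_erase hd)).mono <| by
      simpa only [Finset.filter_erase] using union_image_subset_insert_union_image_erase f ρ _ d₀
  have htgt' := htgt.mono (union_image_subset_insert_union_image_erase f ρ D d₀)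
  by_cases hmρ : m ∈ ρ
  · rw [Finset.insert_eq_of_mem hmρ] at hD' htgt'
    exact ih _ (Finset.erase_ssubset hd₀) ρ hρ hD' htgt' htgtρ
  by_cases hneg : (m.1, !m.2) ∈ ρ
  · have := filter_singleton_mem_restrict_of_unitImplied hρ hm hmρ
    rw [Finset.filter_singleton, if_neg (not_not.2 hneg)] at this
    exact .bot this
  by_cases htm : tgt = m
  · exact htm ▸ .of_unitImplied hρ hm hmρ
  have hunit := filter_singleton_mem_restrict_of_unitImplied hρ hm hmρ
  rw [Finset.filter_singleton, if_pos hneg] at hunit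
  refine .step m hunit ?_
  rw [restrict_restrict_singleton hneg]
  exact ih _ (Finset.erase_ssubset hd₀) _ (hρ.insert hneg) hD' htgt' (by simpa [htm] using htgtρ)

end UnitPropagation

section Enumeration

variable {n k i v : ℕ} {T : Finset ℕ} {σ : ℕ → ℕ}

theorem StrictMonoOn.apply_add_sub_le {a b i j : ℕ} (hσ : StrictMonoOn σ (Set.Icc a b))
    (hi : a ≤ i) (hij : i ≤ j) (hj : j ≤ b) : σ i + (j - i) ≤ σ j := by
  obtain ⟨d, rfl⟩ := Nat.exists_eq_add_of_le hij
  induction d with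
  | zero => simp
  | succ d ih =>
    have hstep : σ (i + d) < σ (i + (d + 1)) :=
      hσ ⟨by omega, by omega⟩ ⟨by omega, hj⟩ (by omega)
    have := ih (by omega) (by omega)
    omega

theorem exists_strictMonoOn_image_Icc_eq (S : Finset ℕ) :
    ∃ σ : ℕ → ℕ, StrictMonoOn σ (Set.Icc 1 S.card) ∧ (Finset.Icc 1 S.card).image σ = S := by
  set e := S.orderEmbOfFin rfl
  refine ⟨fun i => if h : i - 1 < S.card then e ⟨i - 1, h⟩ else 0, ?_, ?_⟩
  · intro i hi j hj hij
    simp only [Set.mem_Icc] at hi hj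
    simp only [dif_pos (show i - 1 < S.card by omega), dif_pos (show j - 1 < S.card by omega)]
    exact e.strictMono (Fin.mk_lt_mk.2 (by omega))
  · ext v
    simp only [Finset.mem_image, Finset.mem_Icc]
    constructor
    · rintro ⟨i, hi, rfl⟩
      rw [dif_pos (by omega)]
      exact S.orderEmbOfFin_mem rfl _
    · intro hv
      obtain ⟨⟨m, hm⟩, rfl⟩ : v ∈ Set.range e := by rwa [Finset.range_orderEmbOfFin]
      exact ⟨m + 1, by omega, by simp [hm]⟩

theorem apply_mem_sdiff (hS : (Finset.Icc 1 k).image σ = Finset.Icc 1 n \ T)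
    (hi : i ∈ Finset.Icc 1 k) : σ i ∈ Finset.Icc 1 n \ T :=
  hS ▸ Finset.mem_image_of_mem σ hi

theorem StrictMonoOn.le_of_image_Icc_eq (hσ : StrictMonoOn σ (Set.Icc 1 k))
    (hS : (Finset.Icc 1 k).image σ = Finset.Icc 1 n \ T) : k ≤ n :=
  calc k = ((Finset.Icc 1 k).image σ).card := by
        rw [Finset.card_image_of_injOn (by rw [Finset.coe_Icc]; exact hσ.injOn)]; simp
    _ ≤ (Finset.Icc 1 n).card := hS ▸ Finset.card_le_card Finset.sdiff_subset
    _ = n := by simp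

theorem StrictMonoOn.apply_mem_Icc_of_image_eq (hσ : StrictMonoOn σ (Set.Icc 1 k))
    (hS : (Finset.Icc 1 k).image σ = Finset.Icc 1 n \ T) (hi : i ∈ Finset.Icc 1 k) :
    σ i ∈ Finset.Icc i (n - k + i) := by
  have hrange (j : ℕ) (hj : j ∈ Finset.Icc 1 k) : σ j ∈ Finset.Icc 1 n :=
    (Finset.mem_sdiff.1 (apply_mem_sdiff hS hj)).1
  rw [Finset.mem_Icc] at hi ⊢
  have h1 := Finset.mem_Icc.1 (hrange 1 (Finset.mem_Icc.2 ⟨le_rfl, by omega⟩))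
  have hk := Finset.mem_Icc.1 (hrange k (Finset.mem_Icc.2 ⟨by omega, le_rfl⟩))
  have := hσ.apply_add_sub_le le_rfl hi.1 hi.2
  have := hσ.apply_add_sub_le hi.1 hi.2 le_rfl
  omega

theorem exists_eq_apply_of_mem (hS : (Finset.Icc 1 k).image σ = Finset.Icc 1 n \ T)
    (hv : v ∈ Finset.Icc 1 n) (hvT : v ∉ T) :
    ∃ m ∈ Finset.Icc 1 k, σ m = v :=
  Finset.mem_image.1 (hS ▸ Finset.mem_sdiff.2 ⟨hv, hvT⟩)

theorem StrictMonoOn.le_apply_pred_of_lt_apply (hσ : StrictMonoOn σ (Set.Icc 1 k))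
    (hS : (Finset.Icc 1 k).image σ = Finset.Icc 1 n \ T) (hi : i ∈ Finset.Icc 1 k)
    (hv : v ∈ Finset.Icc 1 n) (hvT : v ∉ T) (hlt : v < σ i) : 2 ≤ i ∧ v ≤ σ (i - 1) := by
  obtain ⟨m, hm, rfl⟩ := exists_eq_apply_of_mem hS hv hvT
  have hmi : m < i := (hσ.lt_iff_lt (by simpa using hm) (by simpa using hi)).1 hlt
  simp only [Finset.mem_Icc] at hm hi
  refine ⟨by omega, ?_⟩
  have := hσ.apply_add_sub_le hm.1 (show m ≤ i - 1 by omega) (by omega)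
  omega

theorem StrictMonoOn.eq_apply_of_apply_le_of_lt (hσ : StrictMonoOn σ (Set.Icc 1 k))
    (hS : (Finset.Icc 1 k).image σ = Finset.Icc 1 n \ T) (hi : i ∈ Finset.Icc 1 k)
    (hv : v ∈ Finset.Icc 1 n) (hvT : v ∉ T) (hle : σ i ≤ v) (hlt : i < k → v < σ (i + 1)) :
    v = σ i := by
  obtain ⟨m, hm, rfl⟩ := exists_eq_apply_of_mem hS hv hvT
  have hm' : m ∈ Set.Icc 1 k := by simpa using hm
  have hi' : i ∈ Set.Icc 1 k := by simpa using hi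
  obtain hmi | rfl | hmi := lt_trichotomy m i
  · exact absurd ((hσ.lt_iff_lt hm' hi').2 hmi) (not_lt.2 hle)
  · rfl
  · have hik : i < k := lt_of_lt_of_le hmi hm'.2
    have := hσ.monotoneOn ⟨by omega, by omega⟩ hm' (show i + 1 ≤ m by omega)
    exact absurd (hlt hik) (not_lt.2 this)

end Enumeration

section PigeonHole

variable {n k i l : ℕ} {x : ℕ → V} {p : ℕ → ℕ → V} {y : V} {T : Finset ℕ} {σ : ℕ → ℕ}
  {ρ : Finset (Lit V)}

theorem row_mem_phpCond (hi : i ∈ Finset.Icc 1 k) :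
    insert ((y, false) : Lit V) ((Finset.Icc 1 (n - k + 1)).image fun l => ((p i l, true) : Lit V))
      ∈ phpCond n k x p y :=
  Finset.mem_union_left _ (Finset.mem_union_left _ (Finset.mem_image_of_mem _ hi))

theorem binary_mem_phpCond (hi : i ∈ Finset.Icc 1 k) (hl : l ∈ Finset.Icc 1 (n - k + 1)) :
    ({(x (i + l - 1), true), (p i l, false)} : Clause V) ∈ phpCond n k x p y :=
  Finset.mem_union_left _ (Finset.mem_union_right _
    (Finset.mem_image.2 ⟨(i, l), Finset.mem_product.2 ⟨hi, hl⟩, rfl⟩))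

theorem transition_mem_phpCond (hi : i ∈ Finset.Icc 1 (k - 1)) (hl : l ∈ Finset.Icc 1 (n - k)) :
    insert ((p (i + 1) l, false) : Lit V)
        ((Finset.Icc 1 l).image fun l' => ((p i l', true) : Lit V))
      ∈ phpCond n k x p y :=
  Finset.mem_union_right _ (Finset.mem_image.2 ⟨(i, l), Finset.mem_product.2 ⟨hi, hl⟩, rfl⟩)

/-- For `x_{σ 1}, …, x_{σ k}` the unassigned variables in increasing order, the cells `(i, l)`
where propagation sets `p_{i,l}` false: `x_{i+l-1}` is false or comes before `x_{σ i}`. -/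
def falsifiedCells (n k : ℕ) (T : Finset ℕ) (σ : ℕ → ℕ) : Finset (ℕ × ℕ) :=
  (Finset.Icc 1 k ×ˢ Finset.Icc 1 (n - k + 1)).filter fun q =>
    q.1 + q.2 - 1 ∈ T ∨ q.1 + q.2 - 1 < σ q.1

theorem mk_mem_falsifiedCells :
    (i, l) ∈ falsifiedCells n k T σ ↔ (i ∈ Finset.Icc 1 k ∧ l ∈ Finset.Icc 1 (n - k + 1)) ∧
      (i + l - 1 ∈ T ∨ i + l - 1 < σ i) := by
  rw [falsifiedCells, Finset.mem_filter, Finset.mem_product]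

theorem mk_mem_falsifiedCells_of_ne (hσ : StrictMonoOn σ (Set.Icc 1 k))
    (hS : (Finset.Icc 1 k).image σ = Finset.Icc 1 n \ T) (hi : i ∈ Finset.Icc 1 k)
    (hl : l ∈ Finset.Icc 1 (n - k + 1)) (hne : l ≠ σ i - i + 1)
    (hlt : i < k → i + l - 1 < σ (i + 1)) : (i, l) ∈ falsifiedCells n k T σ := by
  refine mk_mem_falsifiedCells.2 ⟨⟨hi, hl⟩, ?_⟩
  by_contra! h
  have hkn := hσ.le_of_image_Icc_eq hS
  have hi' := Finset.mem_Icc.1 hi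
  have hl' := Finset.mem_Icc.1 hl
  have hv : i + l - 1 ∈ Finset.Icc 1 n := Finset.mem_Icc.2 ⟨by omega, by omega⟩
  have := hσ.eq_apply_of_apply_le_of_lt hS hi hv h.1 h.2 hlt
  omega

theorem unitImplied_phpCond_neg (hσ : StrictMonoOn σ (Set.Icc 1 k))
    (hS : (Finset.Icc 1 k).image σ = Finset.Icc 1 n \ T) (hq : (i, l) ∈ falsifiedCells n k T σ)
    (hT : ∀ t ∈ T, ((x t, false) : Lit V) ∈ ρ)
    (hN : ∀ q ∈ falsifiedCells n k T σ, q.1 < i → ((p q.1 q.2, false) : Lit V) ∈ ρ) :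
    UnitImplied (phpCond n k x p y) ρ (p i l, false) := by
  obtain ⟨⟨hi, hl⟩, hcell⟩ := mk_mem_falsifiedCells.1 hq
  by_cases hv : i + l - 1 ∈ T
  · refine ⟨_, binary_mem_phpCond hi hl, by simp, ?_⟩
    simp only [Finset.mem_insert, Finset.mem_singleton]
    rintro _ (rfl | rfl) hne
    · exact hT _ hv
    · exact absurd rfl hne
  -- Otherwise `x_{i+l-1} = x_{σ m}` with `m < i`, so the cells `(i - 1, l')`, `l' ≤ l`, are
  -- falsified and the transition clause of row `i - 1` at column `l` is unit.
  have hi' := Finset.mem_Icc.1 hi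
  have hl' := Finset.mem_Icc.1 hl
  have hσi := Finset.mem_Icc.1 (Finset.mem_sdiff.1 (apply_mem_sdiff hS hi)).1
  have hlt := hcell.resolve_left hv
  obtain ⟨h2, hle⟩ := hσ.le_apply_pred_of_lt_apply hS hi
    (Finset.mem_Icc.2 ⟨by omega, by omega⟩) hv hlt
  obtain ⟨i, rfl⟩ : ∃ i', i = i' + 1 := ⟨i - 1, by omega⟩
  rw [add_tsub_cancel_right] at hle
  have hσpred := Finset.mem_Icc.1 (hσ.apply_mem_Icc_of_image_eq hS (i := i)
    (Finset.mem_Icc.2 ⟨by omega, by omega⟩))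
  refine ⟨_, transition_mem_phpCond (Finset.mem_Icc.2 ⟨by omega, by omega⟩)
    (Finset.mem_Icc.2 ⟨by omega, by omega⟩), Finset.mem_insert_self _ _, ?_⟩
  simp only [Finset.mem_insert, Finset.mem_image, Finset.mem_Icc]
  rintro _ (rfl | ⟨l', hl'', rfl⟩) hne
  · exact absurd rfl hne
  · exact hN (i, l') (mk_mem_falsifiedCells.2 ⟨⟨Finset.mem_Icc.2 ⟨by omega, by omega⟩,
      Finset.mem_Icc.2 ⟨by omega, by omega⟩⟩, Or.inr (by omega)⟩) (Nat.lt_succ_self i)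

theorem unitImplied_phpCond_pos (hσ : StrictMonoOn σ (Set.Icc 1 k))
    (hS : (Finset.Icc 1 k).image σ = Finset.Icc 1 n \ T) (hi : i ∈ Finset.Icc 1 k)
    (hy : ((y, true) : Lit V) ∈ ρ)
    (hN : ∀ q ∈ falsifiedCells n k T σ, ((p q.1 q.2, false) : Lit V) ∈ ρ)
    (hnext : i < k → ((p (i + 1) (σ (i + 1) - (i + 1) + 1), true) : Lit V) ∈ ρ) :
    UnitImplied (phpCond n k x p y) ρ (p i (σ i - i + 1), true) := by
  have hfalse (l : ℕ) (hl : l ∈ Finset.Icc 1 (n - k + 1)) (hlt : i < k → i + l - 1 < σ (i + 1))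
      (hne : ((p i l, true) : Lit V) ≠ (p i (σ i - i + 1), true)) :
      ((p i l, false) : Lit V) ∈ ρ :=
    hN (i, l) (mk_mem_falsifiedCells_of_ne hσ hS hi hl (fun h => hne (h ▸ rfl)) hlt)
  have hσi := Finset.mem_Icc.1 (hσ.apply_mem_Icc_of_image_eq hS hi)
  have hi' := Finset.mem_Icc.1 hi
  -- If `x_{σ (i+1)}` is within reach of row `i`, the transition clause below `p_{i+1,·}` is unit,
  -- otherwise the row clause is.
  by_cases htrans : i < k ∧ σ (i + 1) ≤ n - k + i
  · have hnext' := Finset.mem_Icc.1 (hσ.apply_mem_Icc_of_image_eq hS (i := i + 1)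
      (Finset.mem_Icc.2 ⟨by omega, htrans.1⟩))
    have hlt : σ i < σ (i + 1) := hσ ⟨hi'.1, hi'.2⟩ ⟨by omega, htrans.1⟩ (by omega)
    refine ⟨_, transition_mem_phpCond (i := i) (l := σ (i + 1) - i)
      (Finset.mem_Icc.2 ⟨hi'.1, by omega⟩) (Finset.mem_Icc.2 ⟨by omega, by omega⟩),
      Finset.mem_insert_of_mem (Finset.mem_image.2 ⟨_, Finset.mem_Icc.2 ⟨by omega, by omega⟩, rfl⟩),
      ?_⟩
    simp only [Finset.mem_insert, Finset.mem_image, Finset.mem_Icc]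
    rintro _ (rfl | ⟨l, hl, rfl⟩) hne
    · rw [show σ (i + 1) - i = σ (i + 1) - (i + 1) + 1 by omega]
      exact hnext htrans.1
    · exact hfalse l (Finset.mem_Icc.2 ⟨hl.1, by omega⟩) (fun _ => by omega) hne
  · refine ⟨_, row_mem_phpCond hi,
      Finset.mem_insert_of_mem (Finset.mem_image.2 ⟨σ i - i + 1, ?_, rfl⟩), ?_⟩
    · rw [Finset.mem_Icc]
      omega
    simp only [Finset.mem_insert, Finset.mem_image]
    rintro _ (rfl | ⟨l, hl, rfl⟩) hne
    · exact hy
    · exact hfalse l hl (fun hik => by rw [Finset.mem_Icc] at hl; omega) hne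

theorem unitImplied_phpCond_x (hσ : StrictMonoOn σ (Set.Icc 1 k))
    (hS : (Finset.Icc 1 k).image σ = Finset.Icc 1 n \ T) (hi : i ∈ Finset.Icc 1 k)
    (h : ((p i (σ i - i + 1), true) : Lit V) ∈ ρ) :
    UnitImplied (phpCond n k x p y) ρ (x (σ i), true) := by
  have hσi := Finset.mem_Icc.1 (hσ.apply_mem_Icc_of_image_eq hS hi)
  have hclause := binary_mem_phpCond (n := n) (x := x) (p := p) (y := y) hi
    (l := σ i - i + 1) (Finset.mem_Icc.2 ⟨by omega, by omega⟩)
  rw [show i + (σ i - i + 1) - 1 = σ i by omega] at hclause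
  refine ⟨_, hclause, by simp, ?_⟩
  simp only [Finset.mem_insert, Finset.mem_singleton]
  rintro _ (rfl | rfl) hne
  · exact absurd rfl hne
  · exact h

end PigeonHole

theorem upDerives_restrict_phpCond {n k i₀ : ℕ} {x : ℕ → V} {p : ℕ → ℕ → V} {y : V}
    {T : Finset ℕ} {σ : ℕ → ℕ} (hσ : StrictMonoOn σ (Set.Icc 1 k))
    (hS : (Finset.Icc 1 k).image σ = Finset.Icc 1 n \ T)
    (hxy : ∀ i ∈ Finset.Icc 1 n, x i ≠ y) (hT : T ⊆ Finset.Icc 1 n) (hi₀ : i₀ ∈ Finset.Icc 1 k) :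
    UPDerives (restrict (phpCond n k x p y)
        (insert ((y, true) : Lit V) (T.image fun t => ((x t, false) : Lit V))))
      (x (σ i₀), true) := by
  set D := (falsifiedCells n k T σ).disjSum (Finset.Icc i₀ k)
  set f : ℕ × ℕ ⊕ ℕ → Lit V :=
    Sum.elim (fun q => (p q.1 q.2, false)) fun i => (p i (σ i - i + 1), true)
  -- All falsified cells are propagated first, then rows `k, k - 1, …, i₀` of positive literals.
  set r : ℕ × ℕ ⊕ ℕ → ℕ := Sum.elim Prod.fst fun i => 2 * k + 1 - i
  have hsched {d e} (hd : d ∈ D) (hr : r d < r e) (ρ : Finset (Lit V)) :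
      f d ∈ ρ ∪ (D.filter fun d' => r d' < r e).image f :=
    Finset.mem_union_right _ (Finset.mem_image_of_mem f (Finset.mem_filter.2 ⟨hd, hr⟩))
  have hsub : Finset.Icc i₀ k ⊆ Finset.Icc 1 k :=
    Finset.Icc_subset_Icc_left (Finset.mem_Icc.1 hi₀).1
  refine UPDerives.of_schedule f r _ D _ ?_ ?_ ?_ ?_
  · refine (consistent_of_forall_snd_eq (b := false) ?_).insert ?_
    · simp
    · simpa using fun t ht => hxy t (hT ht)
  · rintro (⟨i, l⟩ | i) hd
    · refine unitImplied_phpCond_neg hσ hS (Finset.inl_mem_disjSum.1 hd)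
        (fun t ht => Finset.mem_union_left _
          (Finset.mem_insert_of_mem (Finset.mem_image_of_mem _ ht)))
        (fun q hq hlt => hsched (e := .inl (i, l)) (Finset.inl_mem_disjSum.2 hq) hlt _)
    · have hi := Finset.mem_Icc.1 (Finset.inr_mem_disjSum.1 hd)
      refine unitImplied_phpCond_pos hσ hS (hsub (Finset.inr_mem_disjSum.1 hd))
        (Finset.mem_union_left _ (Finset.mem_insert_self _ _))
        (fun q hq => hsched (e := .inr i) (Finset.inl_mem_disjSum.2 hq) ?_ _)
        (fun hik => hsched (d := .inr (i + 1)) (e := .inr i)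
          (Finset.inr_mem_disjSum.2 ?_) ?_ _)
      · have := (Finset.mem_Icc.1 ((mk_mem_falsifiedCells (T := T)).1 hq).1.1).2
        simp only [r, Sum.elim_inl, Sum.elim_inr]
        omega
      · exact Finset.mem_Icc.2 ⟨by omega, hik⟩
      · simp only [r, Sum.elim_inr]
        omega
  · exact unitImplied_phpCond_x hσ hS hi₀ (Finset.mem_union_right _ (Finset.mem_image_of_mem f
      (Finset.inr_mem_disjSum.2 (Finset.left_mem_Icc.2 (Finset.mem_Icc.1 hi₀).2))))
  · simpa using hxy _ (Finset.mem_sdiff.1 (apply_mem_sdiff hS hi₀)).1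

theorem stmt10_general {V : Type} [DecidableEq V] (n k : ℕ) (hkn : k ≤ n)
    (x : ℕ → V) (p : ℕ → ℕ → V) (y : V)
    (hxy : ∀ i ∈ Finset.Icc 1 n, x i ≠ y)
    (T : Finset ℕ) (hT : T ⊆ Finset.Icc 1 n) (hTcard : T.card = n - k) :
    ∀ j ∈ Finset.Icc 1 n, j ∉ T →
      UPDerives (restrict (phpCond n k x p y)
          (insert ((y, true) : Lit V) (T.image fun i => ((x i, false) : Lit V))))
        (x j, true) := by
  intro j hj hjT
  have hcard : (Finset.Icc 1 n \ T).card = k := by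
    rw [Finset.card_sdiff_of_subset hT, Nat.card_Icc, hTcard]
    omega
  obtain ⟨σ, hσ, hS⟩ := exists_strictMonoOn_image_Icc_eq (Finset.Icc 1 n \ T)
  rw [hcard] at hσ hS
  obtain ⟨i₀, hi₀, rfl⟩ := Finset.mem_image.1 (hS ▸ Finset.mem_sdiff.2 ⟨hj, hjT⟩)
  exact upDerives_restrict_phpCond hσ hS hxy hT hi₀

/-- For the conditional pigeon-hole encoding of `y → (Σ x_i ≥ k)`,
assigning `y` to true and any `n - k` distinct variables `x_i` to false makes unit
propagation derive `x_j` from the restricted formula for every remaining index `j`. -/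
theorem stmt10 {V : Type} [DecidableEq V] (n k : ℕ) (hk : 1 ≤ k) (hkn : k ≤ n)
    (x : ℕ → V) (p : ℕ → ℕ → V) (y : V)
    (hx : ∀ i ∈ Finset.Icc 1 n, ∀ j ∈ Finset.Icc 1 n, x i = x j → i = j)
    (hpinj : ∀ i ∈ Finset.Icc 1 k, ∀ j ∈ Finset.Icc 1 (n - k + 1),
      ∀ i' ∈ Finset.Icc 1 k, ∀ j' ∈ Finset.Icc 1 (n - k + 1),
        p i j = p i' j' → i = i' ∧ j = j')
    (hxp : ∀ l ∈ Finset.Icc 1 n, ∀ i ∈ Finset.Icc 1 k, ∀ j ∈ Finset.Icc 1 (n - k + 1),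
      x l ≠ p i j)
    (hxy : ∀ i ∈ Finset.Icc 1 n, x i ≠ y)
    (hpy : ∀ i ∈ Finset.Icc 1 k, ∀ j ∈ Finset.Icc 1 (n - k + 1), p i j ≠ y)
    (T : Finset ℕ) (hT : T ⊆ Finset.Icc 1 n) (hTcard : T.card = n - k) :
    ∀ j ∈ Finset.Icc 1 n, j ∉ T →
      UPDerives (restrict (phpCond n k x p y)
          (insert ((y, true) : Lit V) (T.image fun i => ((x i, false) : Lit V))))
        (x j, true) :=
  stmt10_general n k hkn x p y hxy T hT hTcard
end

section
/- Let 1 ≤ k ≤ n and let Φ be the conditional pigeon-hole encoding of y → (x_1 + ⋯ + x_n ≥ k), consisting of: for 1 ≤ i ≤ k the clause (¬y ∨ p_{i,1} ∨ ⋯ ∨ p_{i,n−k+1}); for 1 ≤ i ≤ k and 1 ≤ j ≤ n−k+1 the clause (x_{i+j−1} ∨ ¬p_{i,j}); and for 1 ≤ i < k and 1 ≤ j < n−k+1 the clause (¬p_{i+1,j} ∨ p_{i,1} ∨ ⋯ ∨ p_{i,j}). Then a complete assignment ν of truth values to y, x_1, …, x_n extends to an assignment of the variables p_{i,j} satisfying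 every clause of Φ if and only if ν(y) = true implies that at least k of ν(x_1), …, ν(x_n) are true. -/
variable {V : Type} [DecidableEq V]

open Finset

def Satisfies (μ : V → Bool) (Φ : CnfForm V) : Prop :=
  ∀ c ∈ Φ, ∃ l ∈ c, μ l.1 = l.2

def IsPhpCondModel (n k : ℕ) (b : Bool) (X : ℕ → Bool) (P : ℕ → ℕ → Bool) : Prop :=
  (b = true → ∀ i ∈ Icc 1 k, ∃ j ∈ Icc 1 (n - k + 1), P i j = true) ∧
  (∀ i ∈ Icc 1 k, ∀ j ∈ Icc 1 (n - k + 1), P i j = true → X (i + j - 1) = true) ∧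
  ∀ i ∈ Icc 1 (k - 1), ∀ j ∈ Icc 1 (n - k), P (i + 1) j = true →
    ∃ l ∈ Icc 1 j, P i l = true

theorem satisfies_phpCond_iff (n k : ℕ) (x : ℕ → V) (p : ℕ → ℕ → V) (y : V)
    (μ : V → Bool) :
    Satisfies μ (phpCond n k x p y) ↔
      IsPhpCondModel n k (μ y) (fun m => μ (x m)) (fun i j => μ (p i j)) := by
  simp only [Satisfies, phpCond, IsPhpCondModel, mem_union, or_imp, forall_and, forall_mem_image,
    Prod.forall, mem_product, and_imp, exists_mem_insert, exists_mem_image, mem_singleton,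
    exists_eq_left, Bool.eq_false_iff, ne_eq, ← imp_iff_not_or, and_assoc]
  refine and_congr ⟨fun h hy i hi => h hi hy, fun h i hi hy => h hy i hi⟩ (and_congr ?_
    ⟨fun h i hi j hj => h i j hi hj, fun h i j hi hj => h i hi j hj⟩)
  simp only [or_comm (a := μ (x _) = true), ← imp_iff_not_or]
  exact ⟨fun h i hi j hj => h i j hi hj, fun h i j hi hj => h i hi j hj⟩

theorem Set.InjOn.exists_extend {ι α β : Type*} {q : ι → α} {s : Set ι} (hq : Set.InjOn q s)
    (σ : ι → β) (ν : α → β) :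
    ∃ μ : α → β, (∀ i ∈ s, μ (q i) = σ i) ∧
      ∀ v, (∀ i ∈ s, q i ≠ v) → μ v = ν v := by
  classical
  refine ⟨fun v => if h : v ∈ q '' s then σ h.choose else ν v, fun i hi => ?_,
    fun v hv => dif_neg fun ⟨i, hi, hiv⟩ => hv i hi hiv⟩
  have h : q i ∈ q '' s := Set.mem_image_of_mem q hi
  dsimp only
  rw [dif_pos h, hq h.choose_spec.1 hi h.choose_spec.2]

namespace Nat

variable {p : ℕ → Prop} [DecidablePred p]

theorem exists_count_eq_of_lt_count {i N : ℕ} (h : i < count p N) :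
    ∃ m < N, p m ∧ count p m = i := by
  induction N with
  | zero => simp at h
  | succ N ih =>
    rcases lt_or_ge i (count p N) with hi | hi
    · obtain ⟨m, hm, hpm, hcount⟩ := ih hi
      exact ⟨m, by omega, hpm, hcount⟩
    · have hpN : p N := by
        by_contra hpN
        rw [count_succ, if_neg hpN] at h
        omega
      rw [count_succ, if_pos hpN] at h
      exact ⟨N, by omega, hpN, by omega⟩

theorem count_add_le (a d : ℕ) : count p (a + d) ≤ count p a + d := by
  rw [count_add]
  exact Nat.add_le_add_left (count_le _) _

end Nat

theorem card_filter_Icc_eq_count (X : ℕ → Bool) (n : ℕ) :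
    #{l ∈ Icc 1 n | X l = true} = Nat.count (fun m => X (m + 1) = true) n := by
  induction n with
  | zero => simp
  | succ n ih =>
    rw [Nat.count_succ, ← ih, ← insert_Icc_right_eq_Icc_add_one (by omega), filter_insert]
    split_ifs with h
    · rw [card_insert_of_notMem (by simp)]
    · rfl

theorem count_eq_count_pred_add_one {X : ℕ → Bool} {m : ℕ} (hm : 1 ≤ m) (hX : X m = true) :
    Nat.count (fun l => X (l + 1) = true) m =
      Nat.count (fun l => X (l + 1) = true) (m - 1) + 1 := by
  obtain ⟨m, rfl⟩ := Nat.exists_eq_add_of_le' hm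
  exact Nat.count_succ_eq_succ_count_iff.2 hX

namespace IsPhpCondModel

variable {n k : ℕ} {b : Bool} {X : ℕ → Bool} {P : ℕ → ℕ → Bool}

theorem congr {X' : ℕ → Bool} {P' : ℕ → ℕ → Bool} (hkn : k ≤ n)
    (h : IsPhpCondModel n k b X P) (hX : ∀ m ∈ Icc 1 n, X m = X' m)
    (hP : ∀ i ∈ Icc 1 k, ∀ j ∈ Icc 1 (n - k + 1), P i j = P' i j) :
    IsPhpCondModel n k b X' P' := by
  obtain ⟨hrow, hpos, hprev⟩ := h
  refine ⟨fun hb i hi => ?_, fun i hi j hj hP' => ?_, fun i hi j hj hP' => ?_⟩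
  · obtain ⟨j, hj, hPj⟩ := hrow hb i hi
    exact ⟨j, hj, hP i hi j hj ▸ hPj⟩
  · rw [← hX _ (by grind)]
    exact hpos i hi j hj (by rwa [hP i hi j hj])
  · have hi' : i + 1 ∈ Icc 1 k := by grind
    have hj' : j ∈ Icc 1 (n - k + 1) := by grind
    obtain ⟨l, hl, hPl⟩ := hprev i hi j hj (by rwa [hP _ hi' j hj'])
    exact ⟨l, hl, by rwa [← hP i (by grind) l (by grind)]⟩

theorem exists_prev_row (h : IsPhpCondModel n k true X P) {i j : ℕ} (hi : i ∈ Icc 1 (k - 1))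
    (hj : j ∈ Icc 1 (n - k + 1)) (hP : P (i + 1) j = true) : ∃ l ∈ Icc 1 j, P i l = true := by
  rw [mem_Icc] at hi hj
  -- Clauses of the third kind stop at column `n - k`; in the last column `h.1` suffices.
  rcases lt_or_eq_of_le hj.2 with hlt | rfl
  · exact h.2.2 i (mem_Icc.2 hi) j (mem_Icc.2 ⟨hj.1, by omega⟩) hP
  · exact h.1 rfl i (mem_Icc.2 ⟨hi.1, by omega⟩)

theorem le_count (h : IsPhpCondModel n k true X P) {i : ℕ} (hi : 1 ≤ i) (hik : i ≤ k)
    {j : ℕ} (hj : j ∈ Icc 1 (n - k + 1)) (hP : P i j = true) :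
    i ≤ Nat.count (fun m => X (m + 1) = true) (i + j - 1) := by
  induction i, hi using Nat.le_induction generalizing j with
  | base =>
    have hX := count_eq_count_pred_add_one (by grind)
      (h.2.1 1 (mem_Icc.2 ⟨le_rfl, hik⟩) j hj hP)
    omega
  | succ i hi ih =>
    have hX := count_eq_count_pred_add_one (by grind)
      (h.2.1 _ (mem_Icc.2 ⟨by omega, hik⟩) j hj hP)
    obtain ⟨l, hl, hPl⟩ := h.exists_prev_row (mem_Icc.2 ⟨hi, by omega⟩) hj hP
    have hl' := mem_Icc.1 hl
    have hil := ih (by omega) (mem_Icc.2 ⟨hl'.1, hl'.2.trans (mem_Icc.1 hj).2⟩) hPl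
    have hmono := Nat.count_monotone (fun m => X (m + 1) = true)
      (show i + l - 1 ≤ i + j - 1 by omega)
    rw [show i + 1 + j - 1 - 1 = i + j - 1 by omega] at hX
    omega

theorem le_card (h : IsPhpCondModel n k true X P) (hkn : k ≤ n) :
    k ≤ #{l ∈ Icc 1 n | X l = true} := by
  rcases Nat.eq_zero_or_pos k with rfl | hk
  · exact Nat.zero_le _
  obtain ⟨j, hj, hP⟩ := h.1 rfl k (mem_Icc.2 ⟨hk, le_rfl⟩)
  rw [card_filter_Icc_eq_count]
  exact (h.le_count hk le_rfl hj hP).trans (Nat.count_monotone _ (by grind))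

end IsPhpCondModel

def leftmostPlacement (X : ℕ → Bool) (i j : ℕ) : Bool :=
  decide (X (i + j - 1) = true ∧ Nat.count (fun m => X (m + 1) = true) (i + j - 1) = i)

theorem exists_leftmostPlacement_eq_true {X : ℕ → Bool} {i j : ℕ} (hi : 1 ≤ i)
    (h : i ≤ Nat.count (fun m => X (m + 1) = true) (i + j - 1)) :
    ∃ l ∈ Icc 1 j, leftmostPlacement X i l = true := by
  obtain ⟨m, hm, hXm, hcount⟩ := Nat.exists_count_eq_of_lt_count
    (show i - 1 < Nat.count (fun m => X (m + 1) = true) (i + j - 1) by omega)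
  have hle := Nat.count_le (fun m => X (m + 1) = true) (n := m)
  refine ⟨m + 2 - i, mem_Icc.2 ⟨by omega, by omega⟩, ?_⟩
  rw [leftmostPlacement, show i + (m + 2 - i) - 1 = m + 1 by omega, decide_eq_true_iff,
    Nat.count_succ_eq_succ_count_iff.2 hXm]
  exact ⟨hXm, by omega⟩

theorem isPhpCondModel_leftmostPlacement {n k : ℕ} {X : ℕ → Bool}
    (h : k ≤ #{l ∈ Icc 1 n | X l = true}) :
    IsPhpCondModel n k true X (leftmostPlacement X) := by
  rw [card_filter_Icc_eq_count] at h
  refine ⟨fun _ i hi => ?_, fun i _ j _ hP => ?_, fun i hi j hj hP => ?_⟩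
  · rw [mem_Icc] at hi
    have hkn : k ≤ n := h.trans (Nat.count_le _)
    have hcount := Nat.count_add_le (p := fun m => X (m + 1) = true) (n - k + i) (k - i)
    rw [show n - k + i + (k - i) = n by omega] at hcount
    refine exists_leftmostPlacement_eq_true hi.1 ?_
    rw [show i + (n - k + 1) - 1 = n - k + i by omega]
    omega
  · exact (of_decide_eq_true hP).1
  · obtain ⟨hX, hcount⟩ := of_decide_eq_true hP
    rw [mem_Icc] at hi hj
    rw [count_eq_count_pred_add_one (by omega) hX,
      show i + 1 + j - 1 - 1 = i + j - 1 by omega] at hcount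
    exact exists_leftmostPlacement_eq_true hi.1 (by omega)

theorem exists_isPhpCondModel_iff {n k : ℕ} (hkn : k ≤ n) (b : Bool) (X : ℕ → Bool) :
    (∃ P, IsPhpCondModel n k b X P) ↔ (b = true → k ≤ #{l ∈ Icc 1 n | X l = true}) := by
  refine ⟨fun ⟨P, hP⟩ hb => (hb ▸ hP).le_card hkn, fun h => ?_⟩
  cases b with
  | false => exact ⟨fun _ _ => false, by simp [IsPhpCondModel]⟩
  | true => exact ⟨_, isPhpCondModel_leftmostPlacement (h rfl)⟩

theorem stmt11_general {V : Type} [DecidableEq V] (n k : ℕ) (hkn : k ≤ n)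
    (x : ℕ → V) (p : ℕ → ℕ → V) (y : V)
    (hpinj : ∀ i ∈ Finset.Icc 1 k, ∀ j ∈ Finset.Icc 1 (n - k + 1),
      ∀ i' ∈ Finset.Icc 1 k, ∀ j' ∈ Finset.Icc 1 (n - k + 1),
        p i j = p i' j' → i = i' ∧ j = j')
    (hxp : ∀ l ∈ Finset.Icc 1 n, ∀ i ∈ Finset.Icc 1 k, ∀ j ∈ Finset.Icc 1 (n - k + 1),
      x l ≠ p i j)
    (hpy : ∀ i ∈ Finset.Icc 1 k, ∀ j ∈ Finset.Icc 1 (n - k + 1), p i j ≠ y)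
    (ν : V → Bool) :
    (∃ μ : V → Bool, μ y = ν y ∧ (∀ i ∈ Finset.Icc 1 n, μ (x i) = ν (x i)) ∧
        ∀ c ∈ phpCond n k x p y, ∃ l ∈ c, μ l.1 = l.2) ↔
      (ν y = true → k ≤ ((Finset.Icc 1 n).filter fun i => ν (x i) = true).card) := by
  rw [← exists_isPhpCondModel_iff hkn]
  constructor
  · rintro ⟨μ, hμy, hμx, hsat⟩
    have hμ := (satisfies_phpCond_iff n k x p y μ).1 hsat
    rw [hμy] at hμ
    exact ⟨_, hμ.congr hkn hμx fun _ _ _ _ => rfl⟩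
  · rintro ⟨P, hP⟩
    have hgrid :
        Set.InjOn (fun ij : ℕ × ℕ => p ij.1 ij.2) ↑(Icc 1 k ×ˢ Icc 1 (n - k + 1)) :=
      fun ⟨i, j⟩ hij ⟨i', j'⟩ hij' h =>
        Prod.ext_iff.2 (hpinj i (mem_product.1 hij).1 j (mem_product.1 hij).2
          i' (mem_product.1 hij').1 j' (mem_product.1 hij').2 h)
    obtain ⟨μ, hμP, hμν⟩ := hgrid.exists_extend (fun ij => P ij.1 ij.2) ν
    have hμy : μ y = ν y :=
      hμν y fun ⟨i, j⟩ hij => hpy i (mem_product.1 hij).1 j (mem_product.1 hij).2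
    have hμx : ∀ m ∈ Icc 1 n, μ (x m) = ν (x m) := fun m hm =>
      hμν (x m) fun ⟨i, j⟩ hij h =>
        hxp m hm i (mem_product.1 hij).1 j (mem_product.1 hij).2 h.symm
    refine ⟨μ, hμy, hμx, (satisfies_phpCond_iff n k x p y μ).2 ?_⟩
    rw [hμy]
    exact hP.congr hkn (fun m hm => (hμx m hm).symm)
      fun i hi j hj => (hμP (i, j) (mk_mem_product hi hj)).symm

/-- A complete assignment `ν` of the variables `y, x_1, …, x_n`
extends to an assignment of the variables `p_{i,j}` satisfying every clause of the
conditional pigeon-hole encoding iff `ν y = true` implies that at least `k` of the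
`ν (x i)` are true. -/
theorem stmt11 {V : Type} [DecidableEq V] (n k : ℕ) (hk : 1 ≤ k) (hkn : k ≤ n)
    (x : ℕ → V) (p : ℕ → ℕ → V) (y : V)
    (hx : ∀ i ∈ Finset.Icc 1 n, ∀ j ∈ Finset.Icc 1 n, x i = x j → i = j)
    (hpinj : ∀ i ∈ Finset.Icc 1 k, ∀ j ∈ Finset.Icc 1 (n - k + 1),
      ∀ i' ∈ Finset.Icc 1 k, ∀ j' ∈ Finset.Icc 1 (n - k + 1),
        p i j = p i' j' → i = i' ∧ j = j')
    (hxp : ∀ l ∈ Finset.Icc 1 n, ∀ i ∈ Finset.Icc 1 k, ∀ j ∈ Finset.Icc 1 (n - k + 1),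
      x l ≠ p i j)
    (hxy : ∀ i ∈ Finset.Icc 1 n, x i ≠ y)
    (hpy : ∀ i ∈ Finset.Icc 1 k, ∀ j ∈ Finset.Icc 1 (n - k + 1), p i j ≠ y)
    (ν : V → Bool) :
    (∃ μ : V → Bool, μ y = ν y ∧ (∀ i ∈ Finset.Icc 1 n, μ (x i) = ν (x i)) ∧
        ∀ c ∈ phpCond n k x p y, ∃ l ∈ c, μ l.1 = l.2) ↔
      (ν y = true → k ≤ ((Finset.Icc 1 n).filter fun i => ν (x i) = true).card) :=
  stmt11_general n k hkn x p y hpinj hxp hpy ν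
end

section
/- Let n ≥ 2 and 1 ≤ k < n, and let Φ be the conditional sequential-counter AtMostK encoding of y → (x_1 + ⋯ + x_n ≤ k), consisting of: (¬x_1 ∨ s_{1,1}); for 1 < j ≤ k the clause (¬y ∨ ¬s_{1,j}); for 1 < i < n the clauses (¬x_i ∨ s_{i,1}) and (¬s_{i−1,1} ∨ s_{i,1}); for 1 < i < n and 1 < j ≤ k the clauses (¬x_i ∨ ¬s_{i−1,j−1} ∨ s_{i,j}) and (¬s_{i−1,j} ∨ s_{i,j}); and for 1 < i ≤ n the clause (¬y ∨ ¬x_i ∨ ¬s_{i−1,k}). Then for any set of k+1 distinct indices in {1, …, n}, assigning the corresponding variables x_i to true makes unit propagation derive ¬y from Φ restricted to this assignment. -/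
variable {V : Type} [DecidableEq V]

/-- The conditional sequential-counter AtMostK encoding of `y → (x_1 + ⋯ + x_n ≤ k)`:
`(¬x_1 ∨ s_{1,1})`; for `1 < j ≤ k` the clause `(¬y ∨ ¬s_{1,j})`; for `1 < i < n` the
clauses `(¬x_i ∨ s_{i,1})` and `(¬s_{i-1,1} ∨ s_{i,1})`; for `1 < i < n`, `1 < j ≤ k`
the clauses `(¬x_i ∨ ¬s_{i-1,j-1} ∨ s_{i,j})` and `(¬s_{i-1,j} ∨ s_{i,j})`; and for
`1 < i ≤ n` the clause `(¬y ∨ ¬x_i ∨ ¬s_{i-1,k})`. -/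
def seqAMKCond (n k : ℕ) (x : ℕ → V) (s : ℕ → ℕ → V) (y : V) : CnfForm V :=
  insert ({(x 1, false), (s 1 1, true)} : Clause V)
    (((Finset.Ioc 1 k).image fun j => ({(y, false), (s 1 j, false)} : Clause V))
      ∪ ((Finset.Ioo 1 n).biUnion fun i =>
          ({({(x i, false), (s i 1, true)} : Clause V),
            ({(s (i - 1) 1, false), (s i 1, true)} : Clause V)} : CnfForm V))
      ∪ ((Finset.Ioo 1 n ×ˢ Finset.Ioc 1 k).biUnion fun q =>
          ({({(x q.1, false), (s (q.1 - 1) (q.2 - 1), false), (s q.1 q.2, true)} : Clause V),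
            ({(s (q.1 - 1) q.2, false), (s q.1 q.2, true)} : Clause V)} : CnfForm V))
      ∪ ((Finset.Ioc 1 n).image fun i =>
          ({(y, false), (x i, false), (s (i - 1) k, false)} : Clause V)))

lemma restrict_empty (Φ : CnfForm V) : restrict Φ ∅ = Φ := by
  simp [restrict]

lemma restrict_insert (Φ : CnfForm V) (ρ : Finset (Lit V)) (m : Lit V)
    (h : ∀ a ∈ ρ, a.1 ≠ m.1) :
    restrict (restrict Φ ρ) {m} = restrict Φ (insert m ρ) := by
  have hcm : (m.1, !m.2) ∉ ρ := fun hmem => (h _ hmem) rfl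
  ext d
  simp only [restrict, Finset.mem_image, Finset.mem_filter, Finset.mem_insert,
    Finset.mem_singleton, forall_eq]
  constructor
  · rintro ⟨c', ⟨⟨c, ⟨hcΦ, hQ⟩, rfl⟩, hP⟩, rfl⟩
    refine ⟨c, ⟨hcΦ, ?_⟩, ?_⟩
    · intro l hl
      rcases hl with rfl | hl
      · intro hmc
        exact hP (Finset.mem_filter.mpr ⟨hmc, hcm⟩)
      · exact hQ l hl
    · rw [Finset.filter_filter]
      apply Finset.filter_congr
      intro l _
      tauto
  · rintro ⟨c, ⟨hcΦ, hQ'⟩, rfl⟩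
    refine ⟨c.filter (fun l => (l.1, !l.2) ∉ ρ), ⟨⟨c, ⟨hcΦ, fun l hl => hQ' l (Or.inr hl)⟩, rfl⟩, ?_⟩, ?_⟩
    · intro hmem
      exact hQ' m (Or.inl rfl) (Finset.mem_filter.mp hmem).1
    · rw [Finset.filter_filter]
      apply Finset.filter_congr
      intro l _
      tauto

lemma unit_from_clause {Φ : CnfForm V} {ρ : Finset (Lit V)} {c : Clause V} {u : Lit V}
    (hc : c ∈ Φ) (hu : u ∈ c) (hcomp : (u.1, !u.2) ∉ ρ)
    (hneg : ∀ l ∈ c, l ≠ u → (l.1, !l.2) ∈ ρ)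
    (hnotin : ∀ l ∈ c, l ∉ ρ) :
    ({u} : Clause V) ∈ restrict Φ ρ := by
  simp only [restrict, Finset.mem_image, Finset.mem_filter]
  refine ⟨c, ⟨hc, fun l hl hlc => hnotin l hlc hl⟩, ?_⟩
  ext l
  simp only [Finset.mem_filter, Finset.mem_singleton]
  constructor
  · rintro ⟨hlc, hl⟩
    by_contra hne
    exact hl (hneg l hlc hne)
  · rintro rfl
    exact ⟨hu, hcomp⟩

lemma upderives_closure {ι : Type} [DecidableEq ι] (Φ : CnfForm V) :
    ∀ (N : ℕ) (S : Finset ι), S.card ≤ N → ∀ (acc : Finset (Lit V)) (u : ι → Lit V)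
      (rk : ι → ℕ) (l : Lit V),
    (∀ a ∈ acc, ∀ b ∈ S, a.1 ≠ (u b).1) →
    (∀ b ∈ S, ∀ b' ∈ S, (u b).1 = (u b').1 → b = b') →
    (∀ m ∈ S, ∀ ρ : Finset (Lit V),
        acc ∪ (S.filter fun m' => rk m' < rk m).image u ⊆ ρ → ρ ⊆ acc ∪ S.image u →
        u m ∉ ρ → ({u m} : Clause V) ∈ restrict Φ ρ) →
    ({l} : Clause V) ∈ restrict Φ (acc ∪ S.image u) →
    UPDerives (restrict Φ acc) l := by
  intro N
  induction N with
  | zero =>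
    intro S hS acc u rk l _ _ _ hlast
    have hS0 : S = ∅ := Finset.card_eq_zero.mp (Nat.le_zero.mp hS)
    subst hS0
    simpa using UPDerives.unit hlast
  | succ N ih =>
    intro S hS acc u rk l hvars hinj hstep hlast
    rcases S.eq_empty_or_nonempty with rfl | hne
    · simpa using UPDerives.unit hlast
    · obtain ⟨m, hmS, hmin⟩ := S.exists_min_image rk hne
      have humacc : u m ∉ acc := fun h => hvars _ h m hmS rfl
      have hunit : ({u m} : Clause V) ∈ restrict Φ acc := by
        apply hstep m hmS acc _ Finset.subset_union_left humacc
        have : (S.filter fun m' => rk m' < rk m) = ∅ := by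
          apply Finset.filter_eq_empty_iff.mpr
          intro m' hm'
          exact not_lt.mpr (hmin m' hm')
        rw [this]
        simp
      apply UPDerives.step (u m) hunit
      rw [restrict_insert Φ acc (u m) (fun a ha => hvars a ha m hmS)]
      have hSm : S = insert m (S.erase m) := (Finset.insert_erase hmS).symm
      apply ih (S.erase m)
        (by
          have := Finset.card_erase_of_mem hmS
          omega)
        (insert (u m) acc) u rk l
      · intro a ha b hb
        rcases Finset.mem_insert.mp ha with rfl | ha
        · intro h
          exact (Finset.ne_of_mem_erase hb).symm (hinj m hmS b (Finset.mem_of_mem_erase hb) h)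
        · exact hvars a ha b (Finset.mem_of_mem_erase hb)
      · intro b hb b' hb' h
        exact hinj b (Finset.mem_of_mem_erase hb) b' (Finset.mem_of_mem_erase hb') h
      · intro m' hm' ρ hρ1 hρ2 hum'
        apply hstep m' (Finset.mem_of_mem_erase hm') ρ ?_ ?_ hum'
        · intro z hz
          rcases Finset.mem_union.mp hz with hz | hz
          · exact hρ1 (Finset.mem_union_left _ (Finset.mem_insert_of_mem hz))
          · obtain ⟨b, hb, rfl⟩ := Finset.mem_image.mp hz
            have hb' := Finset.mem_filter.mp hb
            by_cases hbm : b = m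
            · subst hbm
              exact hρ1 (Finset.mem_union_left _ (Finset.mem_insert_self _ _))
            · apply hρ1
              apply Finset.mem_union_right
              exact Finset.mem_image_of_mem u
                (Finset.mem_filter.mpr ⟨Finset.mem_erase.mpr ⟨hbm, hb'.1⟩, hb'.2⟩)
        · intro z hz
          rcases Finset.mem_union.mp (hρ2 hz) with hz' | hz'
          · rcases Finset.mem_insert.mp hz' with rfl | hz'
            · exact Finset.mem_union_right _ (Finset.mem_image_of_mem u hmS)
            · exact Finset.mem_union_left _ hz'
          · obtain ⟨b, hb, rfl⟩ := Finset.mem_image.mp hz'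
            exact Finset.mem_union_right _
              (Finset.mem_image_of_mem u (Finset.mem_of_mem_erase hb))
      · have hsets : insert (u m) acc ∪ (S.erase m).image u = acc ∪ S.image u := by
          apply Finset.Subset.antisymm
          · intro z hz
            rcases Finset.mem_union.mp hz with hz | hz
            · rcases Finset.mem_insert.mp hz with rfl | hz
              · exact Finset.mem_union_right _ (Finset.mem_image_of_mem u hmS)
              · exact Finset.mem_union_left _ hz
            · obtain ⟨b, hb, rfl⟩ := Finset.mem_image.mp hz
              exact Finset.mem_union_right _
                (Finset.mem_image_of_mem u (Finset.mem_of_mem_erase hb))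
          · intro z hz
            rcases Finset.mem_union.mp hz with hz | hz
            · exact Finset.mem_union_left _ (Finset.mem_insert_of_mem hz)
            · obtain ⟨b, hb, rfl⟩ := Finset.mem_image.mp hz
              by_cases hbm : b = m
              · subst hbm
                exact Finset.mem_union_left _ (Finset.mem_insert_self _ _)
              · exact Finset.mem_union_right _
                  (Finset.mem_image_of_mem u (Finset.mem_erase.mpr ⟨hbm, hb⟩))
        rw [hsets]
        exact hlast

lemma unit_two {Φ : CnfForm V} {ρ : Finset (Lit V)} {a w : V}
    (hc : ({(a, false), (w, true)} : Clause V) ∈ Φ)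
    (ha : ((a, true) : Lit V) ∈ ρ)
    (hρpos : ∀ l ∈ ρ, l.2 = true)
    (hw : ((w, true) : Lit V) ∉ ρ) :
    ({((w, true) : Lit V)} : Clause V) ∈ restrict Φ ρ := by
  apply unit_from_clause hc (by simp)
  · intro hmem
    simpa using hρpos _ hmem
  · intro l hl hlne
    rcases Finset.mem_insert.mp hl with rfl | hl
    · exact ha
    · rw [Finset.mem_singleton] at hl; exact absurd hl hlne
  · intro l hl hlρ
    have hpos := hρpos l hlρ
    rcases Finset.mem_insert.mp hl with rfl | hl
    · simp at hpos
    · rw [Finset.mem_singleton] at hl; subst hl; exact hw hlρ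

lemma unit_three {Φ : CnfForm V} {ρ : Finset (Lit V)} {a b w : V}
    (hc : ({(a, false), (b, false), (w, true)} : Clause V) ∈ Φ)
    (ha : ((a, true) : Lit V) ∈ ρ) (hb : ((b, true) : Lit V) ∈ ρ)
    (hρpos : ∀ l ∈ ρ, l.2 = true)
    (hw : ((w, true) : Lit V) ∉ ρ) :
    ({((w, true) : Lit V)} : Clause V) ∈ restrict Φ ρ := by
  apply unit_from_clause hc (by simp)
  · intro hmem
    simpa using hρpos _ hmem
  · intro l hl hlne
    rcases Finset.mem_insert.mp hl with rfl | hl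
    · exact ha
    · rcases Finset.mem_insert.mp hl with rfl | hl
      · exact hb
      · rw [Finset.mem_singleton] at hl; exact absurd hl hlne
  · intro l hl hlρ
    have hpos := hρpos l hlρ
    rcases Finset.mem_insert.mp hl with rfl | hl
    · simp at hpos
    · rcases Finset.mem_insert.mp hl with rfl | hl
      · simp at hpos
      · rw [Finset.mem_singleton] at hl; subst hl; exact hw hlρ

lemma unit_last {Φ : CnfForm V} {ρ : Finset (Lit V)} {a b w : V}
    (hc : ({(w, false), (a, false), (b, false)} : Clause V) ∈ Φ)
    (ha : ((a, true) : Lit V) ∈ ρ) (hb : ((b, true) : Lit V) ∈ ρ)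
    (hρpos : ∀ l ∈ ρ, l.2 = true)
    (hw : ((w, true) : Lit V) ∉ ρ) :
    ({((w, false) : Lit V)} : Clause V) ∈ restrict Φ ρ := by
  apply unit_from_clause hc (by simp)
  · intro hmem
    exact hw (by simpa using hmem)
  · intro l hl hlne
    rcases Finset.mem_insert.mp hl with rfl | hl
    · exact absurd rfl hlne
    · rcases Finset.mem_insert.mp hl with rfl | hl
      · exact ha
      · rw [Finset.mem_singleton] at hl; subst hl; exact hb
  · intro l hl hlρ
    have hpos := hρpos l hlρ
    rcases Finset.mem_insert.mp hl with rfl | hl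
    · simp at hpos
    · rcases Finset.mem_insert.mp hl with rfl | hl
      · simp at hpos
      · rw [Finset.mem_singleton] at hl; subst hl; simp at hpos

-- membership helper lemmas
lemma mem_seq_head (n k : ℕ) (x : ℕ → V) (s : ℕ → ℕ → V) (y : V) :
    ({(x 1, false), (s 1 1, true)} : Clause V) ∈ seqAMKCond n k x s y :=
  Finset.mem_insert_self _ _

lemma mem_seq_B (n k : ℕ) (x : ℕ → V) (s : ℕ → ℕ → V) (y : V) {i : ℕ}
    (hi : i ∈ Finset.Ioo 1 n) (c : Clause V)
    (hc : c = ({(x i, false), (s i 1, true)} : Clause V) ∨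
          c = ({(s (i - 1) 1, false), (s i 1, true)} : Clause V)) :
    c ∈ seqAMKCond n k x s y := by
  apply Finset.mem_insert_of_mem
  apply Finset.mem_union_left
  apply Finset.mem_union_left
  apply Finset.mem_union_right
  apply Finset.mem_biUnion.mpr
  refine ⟨i, hi, ?_⟩
  rcases hc with rfl | rfl
  · exact Finset.mem_insert_self _ _
  · exact Finset.mem_insert_of_mem (Finset.mem_singleton_self _)

lemma mem_seq_C (n k : ℕ) (x : ℕ → V) (s : ℕ → ℕ → V) (y : V) {i j : ℕ}
    (hi : i ∈ Finset.Ioo 1 n) (hj : j ∈ Finset.Ioc 1 k) (c : Clause V)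
    (hc : c = ({(x i, false), (s (i - 1) (j - 1), false), (s i j, true)} : Clause V) ∨
          c = ({(s (i - 1) j, false), (s i j, true)} : Clause V)) :
    c ∈ seqAMKCond n k x s y := by
  apply Finset.mem_insert_of_mem
  apply Finset.mem_union_left
  apply Finset.mem_union_right
  apply Finset.mem_biUnion.mpr
  refine ⟨(i, j), Finset.mem_product.mpr ⟨hi, hj⟩, ?_⟩
  rcases hc with rfl | rfl
  · exact Finset.mem_insert_self _ _
  · exact Finset.mem_insert_of_mem (Finset.mem_singleton_self _)

lemma mem_seq_D (n k : ℕ) (x : ℕ → V) (s : ℕ → ℕ → V) (y : V) {i : ℕ}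
    (hi : i ∈ Finset.Ioc 1 n) :
    ({(y, false), (x i, false), (s (i - 1) k, false)} : Clause V) ∈ seqAMKCond n k x s y := by
  apply Finset.mem_insert_of_mem
  apply Finset.mem_union_right
  exact Finset.mem_image_of_mem _ hi

/-- For the conditional sequential-counter AtMostK encoding of
`y → (x_1 + ⋯ + x_n ≤ k)`, assigning any `k + 1` distinct variables `x_i` to true
makes unit propagation derive `¬y` from the restricted formula. -/
theorem stmt13 {V : Type} [DecidableEq V] (n k : ℕ) (hn : 2 ≤ n) (hk : 1 ≤ k) (hkn : k < n)
    (x : ℕ → V) (s : ℕ → ℕ → V) (y : V)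
    (hx : ∀ i ∈ Finset.Icc 1 n, ∀ j ∈ Finset.Icc 1 n, x i = x j → i = j)
    (hsinj : ∀ i ∈ Finset.Icc 1 (n - 1), ∀ j ∈ Finset.Icc 1 k,
      ∀ i' ∈ Finset.Icc 1 (n - 1), ∀ j' ∈ Finset.Icc 1 k,
        s i j = s i' j' → i = i' ∧ j = j')
    (hxs : ∀ l ∈ Finset.Icc 1 n, ∀ i ∈ Finset.Icc 1 (n - 1), ∀ j ∈ Finset.Icc 1 k,
      x l ≠ s i j)
    (hxy : ∀ i ∈ Finset.Icc 1 n, x i ≠ y)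
    (hsy : ∀ i ∈ Finset.Icc 1 (n - 1), ∀ j ∈ Finset.Icc 1 k, s i j ≠ y)
    (T : Finset ℕ) (hT : T ⊆ Finset.Icc 1 n) (hTcard : T.card = k + 1) :
    UPDerives (restrict (seqAMKCond n k x s y) (T.image fun i => ((x i, true) : Lit V)))
      (y, false) := by
    classical
  -- the enumeration of T in increasing order
  obtain ⟨t, htT, htmono⟩ : ∃ t : ℕ → ℕ,
      (∀ j ≤ k, t j ∈ T) ∧ (∀ a b : ℕ, a < b → b ≤ k → t a < t b) := by
    refine ⟨fun j => if h : j < k + 1 then ((T.orderIsoOfFin hTcard) ⟨j, h⟩ : ℕ) else n,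
      ?_, ?_⟩
    · intro j hj
      simp only [dif_pos (by omega : j < k + 1)]
      exact ((T.orderIsoOfFin hTcard) ⟨j, _⟩).2
    · intro a b hab hbk
      simp only [dif_pos (by omega : a < k + 1), dif_pos (by omega : b < k + 1)]
      have := (T.orderIsoOfFin hTcard).strictMono
        (show (⟨a, by omega⟩ : Fin (k + 1)) < ⟨b, by omega⟩ from hab)
      exact this
  have htbd : ∀ j ≤ k, 1 ≤ t j ∧ t j ≤ n := by
    intro j hj
    exact Finset.mem_Icc.mp (hT (htT j hj))
  have htj : ∀ j ≤ k, j + 1 ≤ t j := by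
    intro j
    induction j with
    | zero => intro h; exact (htbd 0 (by omega)).1
    | succ j ihj =>
      intro h
      have h1 := ihj (by omega)
      have h2 := htmono j (j + 1) (by omega) h
      omega
  set acc : Finset (Lit V) := T.image fun i => ((x i, true) : Lit V) with hacc
  set u : ℕ × ℕ → Lit V := fun p => ((s p.1 (p.2 + 1), true) : Lit V) with hu
  set S : Finset (ℕ × ℕ) :=
    (Finset.range n ×ˢ Finset.range k).filter fun p => t p.2 ≤ p.1 ∧ p.1 < t (p.2 + 1)
    with hS
  have hmemS : ∀ i j : ℕ, (i, j) ∈ S ↔ j < k ∧ t j ≤ i ∧ i < t (j + 1) := by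
    intro i j
    simp only [hS, Finset.mem_filter, Finset.mem_product, Finset.mem_range]
    constructor
    · rintro ⟨⟨_, h2⟩, h3, h4⟩; exact ⟨h2, h3, h4⟩
    · rintro ⟨h2, h3, h4⟩
      exact ⟨⟨lt_of_lt_of_le h4 (htbd (j + 1) (by omega)).2, h2⟩, h3, h4⟩
  have hrangeS : ∀ p ∈ S, (1 ≤ p.1 ∧ p.1 ≤ n - 1) ∧ (1 ≤ p.2 + 1 ∧ p.2 + 1 ≤ k) := by
    rintro ⟨i, j⟩ hp
    obtain ⟨h1, h2, h3⟩ := (hmemS i j).mp hp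
    have hb1 := htbd j (by omega)
    have hb2 := htbd (j + 1) (by omega)
    simp only
    omega
  refine upderives_closure (seqAMKCond n k x s y) S.card S le_rfl acc u
    (fun p => p.2 * n + p.1) ((y, false)) ?_ ?_ ?_ ?_
  · -- hvars
    rintro a ha ⟨i, j⟩ hb
    obtain ⟨i0, hi0, rfl⟩ := Finset.mem_image.mp ha
    have hr := hrangeS _ hb
    exact hxs i0 (hT hi0) i (Finset.mem_Icc.mpr hr.1) (j + 1) (Finset.mem_Icc.mpr hr.2)
  · -- hinj
    rintro ⟨i, j⟩ hb ⟨i', j'⟩ hb' h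
    have hr := hrangeS _ hb
    have hr' := hrangeS _ hb'
    obtain ⟨h1, h2⟩ := hsinj i (Finset.mem_Icc.mpr hr.1) (j + 1) (Finset.mem_Icc.mpr hr.2)
      i' (Finset.mem_Icc.mpr hr'.1) (j' + 1) (Finset.mem_Icc.mpr hr'.2) h
    simp only [Prod.mk.injEq]
    omega
  · -- hstep
    rintro ⟨i, j⟩ hm ρ hρ1 hρ2 hum
    obtain ⟨hjk, hti, hit⟩ := (hmemS i j).mp hm
    have hρpos : ∀ l ∈ ρ, l.2 = true := by
      intro l hl
      rcases Finset.mem_union.mp (hρ2 hl) with h | h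
      · obtain ⟨i0, _, rfl⟩ := Finset.mem_image.mp h; rfl
      · obtain ⟨p, _, rfl⟩ := Finset.mem_image.mp h; rfl
    have haccρ : ∀ i0 ∈ T, ((x i0, true) : Lit V) ∈ ρ := by
      intro i0 hi0
      exact hρ1 (Finset.mem_union_left _ (Finset.mem_image_of_mem _ hi0))
    have hlow : ∀ p : ℕ × ℕ, p ∈ S → p.2 * n + p.1 < j * n + i → u p ∈ ρ := by
      intro p hp hrk
      exact hρ1 (Finset.mem_union_right _
        (Finset.mem_image_of_mem u (Finset.mem_filter.mpr ⟨hp, hrk⟩)))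
    have hb0 := htbd j (by omega)
    have hb1 := htbd (j + 1) (by omega)
    have hwnot : ((s i (j + 1), true) : Lit V) ∉ ρ := hum
    show ({((s i (j + 1), true) : Lit V)} : Clause V) ∈ restrict (seqAMKCond n k x s y) ρ
    by_cases hij : t j = i
    · -- seed clause at level j
      by_cases hj0 : j = 0
      · subst hj0
        have hxiρ : ((x i, true) : Lit V) ∈ ρ := haccρ i (hij ▸ htT 0 (by omega))
        by_cases h1 : i = 1
        · subst h1
          exact unit_two (mem_seq_head n k x s y) hxiρ hρpos hwnot
        · have hi2 : 1 < i := by omega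
          have hin : i < n := lt_of_lt_of_le hit hb1.2
          exact unit_two (mem_seq_B n k x s y (Finset.mem_Ioo.mpr ⟨hi2, hin⟩) _ (Or.inl rfl))
            hxiρ hρpos hwnot
      · -- 1 ≤ j
        have hj1 : 1 ≤ j := by omega
        have hitj := htj j (by omega)
        have hxiρ : ((x i, true) : Lit V) ∈ ρ := haccρ i (hij ▸ htT j (by omega))
        have hc := mem_seq_C n k x s y (i := i) (j := j + 1)
          (Finset.mem_Ioo.mpr ⟨by omega, lt_of_lt_of_le hit hb1.2⟩)
          (Finset.mem_Ioc.mpr ⟨by omega, by omega⟩) _ (Or.inl rfl)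
        rw [Nat.add_sub_cancel] at hc
        have hbρ : ((s (i - 1) j, true) : Lit V) ∈ ρ := by
          have hj11 : j - 1 + 1 = j := by omega
          have hmem : ((i - 1, j - 1) : ℕ × ℕ) ∈ S := by
            rw [hmemS]
            refine ⟨by omega, ?_, ?_⟩
            · have := htmono (j - 1) j (by omega) (by omega)
              omega
            · rw [hj11]; omega
          have hrk : (j - 1) * n + (i - 1) < j * n + i := by
            have e1 : (j - 1) * n = j * n - n := Nat.sub_one_mul j n
            have e2 : n ≤ j * n := Nat.le_mul_of_pos_left n (by omega)
            have e3 : i ≤ n := by omega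
            omega
          have := hlow _ hmem hrk
          simpa [hu, hj11] using this
        exact unit_three hc hxiρ hbρ hρpos hwnot
    · -- chain clause: t j < i
      have hti' : t j < i := lt_of_le_of_ne hti hij
      have htj1 := htj j (by omega)
      have haρ : ((s (i - 1) (j + 1), true) : Lit V) ∈ ρ := by
        have hmem : ((i - 1, j) : ℕ × ℕ) ∈ S := by
          rw [hmemS]
          exact ⟨hjk, by omega, by omega⟩
        have hrk : j * n + (i - 1) < j * n + i := by omega
        exact hlow _ hmem hrk
      by_cases hj0 : j = 0
      · subst hj0
        have hc := mem_seq_B n k x s y (i := i)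
          (Finset.mem_Ioo.mpr ⟨by omega, lt_of_lt_of_le hit hb1.2⟩) _ (Or.inr rfl)
        exact unit_two hc haρ hρpos hwnot
      · have hc := mem_seq_C n k x s y (i := i) (j := j + 1)
          (Finset.mem_Ioo.mpr ⟨by omega, lt_of_lt_of_le hit hb1.2⟩)
          (Finset.mem_Ioc.mpr ⟨by omega, by omega⟩) _ (Or.inr rfl)
        exact unit_two hc haρ hρpos hwnot
  · -- hlast
    have hk1 := htbd k le_rfl
    have hk2 := htj k le_rfl
    have hρpos : ∀ l ∈ acc ∪ S.image u, l.2 = true := by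
      intro l hl
      rcases Finset.mem_union.mp hl with h | h
      · obtain ⟨i0, _, rfl⟩ := Finset.mem_image.mp h; rfl
      · obtain ⟨p, _, rfl⟩ := Finset.mem_image.mp h; rfl
    have hc := mem_seq_D n k x s y (i := t k) (Finset.mem_Ioc.mpr ⟨by omega, hk1.2⟩)
    have haρ : ((x (t k), true) : Lit V) ∈ acc ∪ S.image u :=
      Finset.mem_union_left _ (Finset.mem_image_of_mem _ (htT k le_rfl))
    have hbρ : ((s (t k - 1) k, true) : Lit V) ∈ acc ∪ S.image u := by
      apply Finset.mem_union_right
      have hk11 : k - 1 + 1 = k := by omega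
      have hmem : ((t k - 1, k - 1) : ℕ × ℕ) ∈ S := by
        rw [hmemS]
        refine ⟨by omega, ?_, ?_⟩
        · have := htmono (k - 1) k (by omega) le_rfl
          omega
        · rw [hk11]; omega
      have := Finset.mem_image_of_mem u hmem
      simpa [hu, hk11] using this
    have hyρ : ((y, true) : Lit V) ∉ acc ∪ S.image u := by
      intro hmem
      rcases Finset.mem_union.mp hmem with h | h
      · obtain ⟨i0, hi0, heq⟩ := Finset.mem_image.mp h
        exact hxy i0 (hT hi0) (congrArg Prod.fst heq)
      · obtain ⟨p, hp, heq⟩ := Finset.mem_image.mp h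
        have hr := hrangeS p hp
        exact hsy p.1 (Finset.mem_Icc.mpr hr.1) (p.2 + 1) (Finset.mem_Icc.mpr hr.2)
          (congrArg Prod.fst heq)
    exact unit_last hc haρ hbρ hρpos hyρ
end
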